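/- arXiv:2211.04702 — 3 statements merged into one kernel-verified Lean document; each statement's English description precedes it below -/
import Mathlib

section
/- Let Y be a real-valued random variable and let X and Z be random vectors taking values in ℝ^p and ℝ^q respectively, all on the same probability space. Suppose Y is not almost surely equal to a measurable function of X. Then T(Y,Z|X) = 1 if and only if there exists a measurable function g : ℝ^p × ℝ^q → ℝ such that Y = g(X,Z) almost surely. -/
open MeasureTheory ProbabilityTheory Filter Set
open scoped NNReal Topology
open scoped ENNReal

/-- The conditional variance `Var(f | m) = E[(f − E[f|m])² | m]`. -/
noncomputable def condVariance {Ω : Type*} [MeasurableSpace Ω]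
    (P : Measure Ω) (m : MeasurableSpace Ω) (f : Ω → ℝ) : Ω → ℝ :=
  P[(fun ω => (f ω - (P[f | m]) ω) ^ 2) | m]

/-- The conditional dependence coefficient
`T(Y,Z|X) = (∫ E[Var(P(Y≥t | X,Z) | X)] dμ(t)) / (∫ E[Var(1_{Y≥t} | X)] dμ(t))`,
where `μ` is the law of `Y`. -/
noncomputable def Tcoef {Ω E F : Type*} [MeasurableSpace Ω] [MeasurableSpace E]
    [MeasurableSpace F] (P : Measure Ω) (Y : Ω → ℝ) (X : Ω → E) (Z : Ω → F) : ℝ :=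
  (∫ t, ∫ ω, condVariance P (MeasurableSpace.comap X inferInstance)
      (P[(fun ω' => if t ≤ Y ω' then (1 : ℝ) else 0) |
        MeasurableSpace.comap (fun ω' => (X ω', Z ω')) inferInstance]) ω ∂P
    ∂(Measure.map Y P)) /
  (∫ t, ∫ ω, condVariance P (MeasurableSpace.comap X inferInstance)
      (fun ω' => if t ≤ Y ω' then (1 : ℝ) else 0) ω ∂P
    ∂(Measure.map Y P))

/-- `Y` and `Z` are conditionally independent given `X`: for all measurable sets `s, t`,
`E[1_{Y∈s} 1_{Z∈t} | σ(X)] = E[1_{Y∈s} | σ(X)] · E[1_{Z∈t} | σ(X)]` a.s. -/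
def CondIndepGiven {Ω E F G : Type*} [MeasurableSpace Ω] [MeasurableSpace E]
    [MeasurableSpace F] [MeasurableSpace G]
    (P : Measure Ω) (X : Ω → E) (Y : Ω → F) (Z : Ω → G) : Prop :=
  ∀ s : Set F, MeasurableSet s → ∀ t : Set G, MeasurableSet t →
    (P[(fun ω => Set.indicator s (fun _ => (1 : ℝ)) (Y ω) *
          Set.indicator t (fun _ => (1 : ℝ)) (Z ω)) |
        MeasurableSpace.comap X inferInstance]) =ᵐ[P]
    (fun ω => (P[(fun ω' => Set.indicator s (fun _ => (1 : ℝ)) (Y ω')) |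
        MeasurableSpace.comap X inferInstance]) ω *
      (P[(fun ω' => Set.indicator t (fun _ => (1 : ℝ)) (Z ω')) |
        MeasurableSpace.comap X inferInstance]) ω)

section Helpers

variable {Ω : Type*} {mΩ : MeasurableSpace Ω} {P : Measure Ω} [IsProbabilityMeasure P]

lemma integrable_of_abs_le_one {u : Ω → ℝ} (hu : AEStronglyMeasurable u P)
    (h : ∀ᵐ ω ∂P, |u ω| ≤ 1) : Integrable u P :=
  Integrable.mono' (integrable_const 1) hu (by filter_upwards [h] with ω hω; simpa using hω)

lemma condexp_mem_Icc {m : MeasurableSpace Ω} (hm : m ≤ mΩ) {u : Ω → ℝ}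
    (hu : Integrable u P) (h0 : 0 ≤ᵐ[P] u) (h1 : u ≤ᵐ[P] fun _ => (1:ℝ)) :
    (0 ≤ᵐ[P] P[u|m]) ∧ (P[u|m] ≤ᵐ[P] fun _ => (1:ℝ)) := by
  haveI : SigmaFinite (P.trim hm) := by infer_instance
  constructor
  · exact condExp_nonneg h0
  · have h2 := condExp_mono (m := m) hu (integrable_const (1:ℝ)) h1
    rwa [condExp_const (μ := P) hm (1:ℝ)] at h2

/-- Key integral computation: `∫ (u - E[u|m])² = ∫ u² - ∫ (E[u|m])²`. -/
lemma integral_sub_condexp_sq {m : MeasurableSpace Ω} (hm : m ≤ mΩ) {u : Ω → ℝ}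
    (hu : AEStronglyMeasurable[mΩ] u P) (h0 : 0 ≤ᵐ[P] u) (h1 : u ≤ᵐ[P] fun _ => (1:ℝ)) :
    ∫ ω, (u ω - (P[u|m]) ω) ^ 2 ∂P
      = ∫ ω, (u ω) ^ 2 ∂P - ∫ ω, ((P[u|m]) ω) ^ 2 ∂P := by
  haveI : SigmaFinite (P.trim hm) := by infer_instance
  have hub : ∀ᵐ ω ∂P, |u ω| ≤ 1 := by
    filter_upwards [h0, h1] with ω hω0 hω1
    simp only [Pi.zero_apply] at hω0
    rw [abs_le]; exact ⟨by linarith, hω1⟩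
  have huint : Integrable u P := integrable_of_abs_le_one hu hub
  set h : Ω → ℝ := P[u|m] with hh
  have hhb : ∀ᵐ ω ∂P, |h ω| ≤ 1 := by
    have := ae_bdd_condExp_of_ae_bdd (m := m) (R := 1) (by simpa using hub)
    simpa using this
  have hhsm : StronglyMeasurable[m] h := stronglyMeasurable_condExp
  have hha : AEStronglyMeasurable[mΩ] h P := (hhsm.mono hm).aestronglyMeasurable
  have hint_sq : Integrable (fun ω => (u ω)^2) P := by
    refine integrable_of_abs_le_one ((hu.mul hu).congr ?_) ?_
    · filter_upwards with ω; simp [pow_two]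
    · filter_upwards [hub] with ω hω
      rw [abs_pow]; exact pow_le_one₀ (abs_nonneg _) hω
  have hint_hsq : Integrable (fun ω => (h ω)^2) P := by
    refine integrable_of_abs_le_one ((hha.mul hha).congr ?_) ?_
    · filter_upwards with ω; simp [pow_two]
    · filter_upwards [hhb] with ω hω
      rw [abs_pow]; exact pow_le_one₀ (abs_nonneg _) hω
  have hint_hu : Integrable (fun ω => h ω * u ω) P := by
    refine integrable_of_abs_le_one (hha.mul hu) ?_
    filter_upwards [hub, hhb] with ω h1 h2
    rw [abs_mul]; exact mul_le_one₀ h2 (abs_nonneg _) h1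
  have hcross : ∫ ω, h ω * u ω ∂P = ∫ ω, (h ω)^2 ∂P := by
    have e1 : P[(fun ω => h ω * u ω)|m] =ᵐ[P] fun ω => h ω * (P[u|m]) ω := by
      have := condExp_mul_of_stronglyMeasurable_left hhsm hint_hu huint
      exact this
    calc ∫ ω, h ω * u ω ∂P = ∫ ω, (P[(fun ω => h ω * u ω)|m]) ω ∂P :=
          (integral_condExp hm).symm
      _ = ∫ ω, h ω * (P[u|m]) ω ∂P := integral_congr_ae e1
      _ = ∫ ω, (h ω)^2 ∂P := by congr 1; funext ω; rw [← hh]; ring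
  have expand : (fun ω => (u ω - h ω)^2)
      = fun ω => (u ω)^2 - (2 * (h ω * u ω) - (h ω)^2) := by funext ω; ring
  have h2int : Integrable (fun ω => 2 * (h ω * u ω) - (h ω)^2) P :=
    (hint_hu.const_mul 2).sub hint_hsq
  rw [expand, integral_sub hint_sq h2int,
    integral_sub (hint_hu.const_mul 2) hint_hsq, integral_const_mul, hcross]
  ring

lemma integral_condVariance_eq {m : MeasurableSpace Ω} (hm : m ≤ mΩ) {u : Ω → ℝ}
    (hu : AEStronglyMeasurable[mΩ] u P) (h0 : 0 ≤ᵐ[P] u) (h1 : u ≤ᵐ[P] fun _ => (1:ℝ)) :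
    ∫ ω, (P[(fun ω' => (u ω' - (P[u|m]) ω') ^ 2)|m]) ω ∂P
      = ∫ ω, (u ω) ^ 2 ∂P - ∫ ω, ((P[u|m]) ω) ^ 2 ∂P := by
  haveI : SigmaFinite (P.trim hm) := by infer_instance
  rw [← integral_sub_condexp_sq hm hu h0 h1]
  exact integral_condExp hm

/-- Pointwise lemma: conditions forcing a probability measure `ν` on `ℝ` to give mass one
to `{y}`. -/
lemma measure_singleton_eq_one_aux (μ ν : Measure ℝ) [IsProbabilityMeasure ν] (y : ℝ)
    {B : Set ℝ}
    (hdens : ∀ t1 t2 : ℝ, t1 < t2 → μ (Ioo t1 t2) ≠ 0 →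
      ∃ d, (t1 < d ∧ d < t2) ∧ ν (Ici d) = (if d ≤ y then 1 else 0))
    (hatom : ∀ t : ℝ, μ {t} ≠ 0 → ν (Ici t) = (if t ≤ y then 1 else 0))
    (hDr : ∀ t : ℝ, t ∉ B → μ {t} = 0 → (∃ q : ℚ, (q:ℝ) < t ∧ μ (Ioo (q:ℝ) t) = 0) →
        (∀ q : ℚ, t < (q:ℝ) → μ (Ioo t (q:ℝ)) ≠ 0) → ν (Ici t) = (if t ≤ y then 1 else 0))
    (hB : ν B = 0) (hyB : y ∉ B)
    (hsubV : ∀ s : Set ℝ,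
      (∀ x ∈ s, ∃ q1 q2 : ℚ, (q1:ℝ) < x ∧ x < (q2:ℝ) ∧ μ (Ioo (q1:ℝ) (q2:ℝ)) = 0) → ν s = 0)
    (hyV : ∀ q1 q2 : ℚ, (q1:ℝ) < y → y < (q2:ℝ) → μ (Ioo (q1:ℝ) (q2:ℝ)) ≠ 0) :
    ν {y} = 1 := by
  have hIio : ∀ d : ℝ, d ≤ y → ν (Ici d) = (if d ≤ y then 1 else 0) → ν (Iio d) = 0 := by
    intro d hd h
    rw [if_pos hd] at h
    have hc := measure_compl (μ := ν) (measurableSet_Ici (a := d)) (measure_ne_top ν _)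
    rw [compl_Ici] at hc
    rw [hc, h, measure_univ, tsub_self]
  have hIciq : ∀ b : ℝ, y ≤ b → (∀ q : ℚ, b < (q:ℝ) → μ (Ioo b (q:ℝ)) ≠ 0) →
      ν (Ioi b) = 0 := by
    intro b hb hpos
    have hcov : Ioi b ⊆ ⋃ (q : ℚ) (_ : b < (q:ℝ)), Ici (q:ℝ) := by
      intro x hx
      obtain ⟨q, hq1, hq2⟩ := exists_rat_btwn (show b < x from hx)
      exact mem_iUnion₂.mpr ⟨q, hq1, hq2.le⟩
    have hnull : ν (⋃ (q : ℚ) (_ : b < (q:ℝ)), Ici (q:ℝ)) = 0 := by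
      refine measure_iUnion_null fun q => measure_iUnion_null fun hq => ?_
      obtain ⟨d, ⟨hd1, hd2⟩, hgd⟩ := hdens b q hq (hpos q hq)
      have h0 : ν (Ici d) = 0 := by
        rw [hgd, if_neg (not_le.mpr (lt_of_le_of_lt hb hd1))]
      exact le_antisymm ((measure_mono (Ici_subset_Ici.mpr hd2.le)).trans h0.le) (zero_le)
    exact le_antisymm ((measure_mono hcov).trans hnull.le) (zero_le)
  -- right side
  have hR : ν (Ioi y) = 0 := by
    by_cases hJ : ∀ s : ℝ, y < s → μ (Ioo y s) ≠ 0
    · exact hIciq y le_rfl fun q hq => hJ q hq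
    · push_neg at hJ
      obtain ⟨s0, hs0y, hs0⟩ := hJ
      set J := {s : ℝ | y < s ∧ μ (Ioo y s) = 0} with hJdef
      have hs0J : s0 ∈ J := ⟨hs0y, hs0⟩
      by_cases hbd : BddAbove J
      · set β := sSup J with hβdef
        have hyβ : y < β := lt_of_lt_of_le hs0y (le_csSup hbd hs0J)
        have hμgap : μ (Ioo y β) = 0 := by
          have hcov : Ioo y β ⊆ ⋃ (q : ℚ) (_ : μ (Ioo y (q:ℝ)) = 0), Ioo y (q:ℝ) := by
            intro x hx
            obtain ⟨s', hs'J, hxs'⟩ := exists_lt_of_lt_csSup ⟨s0, hs0J⟩ hx.2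
            obtain ⟨q, hq1, hq2⟩ := exists_rat_btwn hxs'
            have hq0 : μ (Ioo y (q:ℝ)) = 0 :=
              le_antisymm ((measure_mono (Ioo_subset_Ioo le_rfl hq2.le)).trans hs'J.2.le)
                (zero_le)
            exact mem_iUnion₂.mpr ⟨q, hq0, ⟨hx.1, hq1⟩⟩
          have h0 : μ (⋃ (q : ℚ) (_ : μ (Ioo y (q:ℝ)) = 0), Ioo y (q:ℝ)) = 0 :=
            measure_iUnion_null fun q : ℚ =>
              measure_iUnion_null fun h : μ (Ioo y (q:ℝ)) = 0 => h
          exact le_antisymm ((measure_mono hcov).trans h0.le) (zero_le)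
        have hνgap : ν (Ioo y β) = 0 := by
          refine hsubV _ fun x hx => ?_
          obtain ⟨q1, hq11, hq12⟩ := exists_rat_btwn hx.1
          obtain ⟨q2, hq21, hq22⟩ := exists_rat_btwn hx.2
          exact ⟨q1, q2, hq12, hq21,
            le_antisymm ((measure_mono (Ioo_subset_Ioo hq11.le hq22.le)).trans hμgap.le)
              (zero_le)⟩
        by_cases hβa : μ {β} = 0
        · have hrpos : ∀ q : ℚ, β < (q:ℝ) → μ (Ioo β (q:ℝ)) ≠ 0 := by
            intro q hq h0
            have hcov : Ioo y (q:ℝ) ⊆ Ioo y β ∪ ({β} ∪ Ioo β (q:ℝ)) := by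
              intro x hx
              rcases lt_trichotomy x β with h | h | h
              · exact Or.inl ⟨hx.1, h⟩
              · exact Or.inr (Or.inl (by simp [h]))
              · exact Or.inr (Or.inr ⟨h, hx.2⟩)
            have hq0 : μ (Ioo y (q:ℝ)) = 0 := by
              refine le_antisymm ((measure_mono hcov).trans ?_) (zero_le)
              calc μ (Ioo y β ∪ ({β} ∪ Ioo β (q:ℝ)))
                  ≤ μ (Ioo y β) + (μ {β} + μ (Ioo β (q:ℝ))) :=
                    (measure_union_le _ _).trans (by gcongr; exact measure_union_le _ _)
                _ = 0 := by simp [hμgap, hβa, h0]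
            exact absurd (le_csSup hbd ⟨lt_trans hyβ hq, hq0⟩) (not_le.mpr hq)
          have hνIoiβ : ν (Ioi β) = 0 := hIciq β hyβ.le hrpos
          have hνβ : ν {β} = 0 := by
            by_cases hβB : β ∈ B
            · exact le_antisymm
                ((measure_mono (singleton_subset_iff.mpr hβB)).trans hB.le) (zero_le)
            · obtain ⟨q, hq1, hq2⟩ := exists_rat_btwn hyβ
              have hg := hDr β hβB hβa
                ⟨q, hq2, le_antisymm
                  ((measure_mono (Ioo_subset_Ioo hq1.le le_rfl)).trans hμgap.le) (zero_le)⟩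
                hrpos
              have h0 : ν (Ici β) = 0 := by rw [hg, if_neg (not_le.mpr hyβ)]
              exact le_antisymm
                ((measure_mono (singleton_subset_iff.mpr self_mem_Ici)).trans h0.le) (zero_le)
          have hcov : Ioi y ⊆ Ioo y β ∪ ({β} ∪ Ioi β) := by
            intro x hx
            rcases lt_trichotomy x β with h | h | h
            · exact Or.inl ⟨hx, h⟩
            · exact Or.inr (Or.inl (by simp [h]))
            · exact Or.inr (Or.inr h)
          refine le_antisymm ((measure_mono hcov).trans ?_) (zero_le)
          calc ν (Ioo y β ∪ ({β} ∪ Ioi β))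
              ≤ ν (Ioo y β) + (ν {β} + ν (Ioi β)) :=
                (measure_union_le _ _).trans (by gcongr; exact measure_union_le _ _)
            _ = 0 := by simp [hνgap, hνβ, hνIoiβ]
        · have hg := hatom β hβa
          have hIciβ : ν (Ici β) = 0 := by rw [hg, if_neg (not_le.mpr hyβ)]
          have hcov : Ioi y ⊆ Ioo y β ∪ Ici β := by
            intro x hx
            rcases lt_or_ge x β with h | h
            · exact Or.inl ⟨hx, h⟩
            · exact Or.inr h
          refine le_antisymm ((measure_mono hcov).trans ?_) (zero_le)
          exact (measure_union_le _ _).trans (by simp [hνgap, hIciβ])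
      · refine hsubV (Ioi y) fun x hx => ?_
        obtain ⟨s', hs'J, hxs'⟩ := not_bddAbove_iff.mp hbd x
        obtain ⟨q1, hq11, hq12⟩ := exists_rat_btwn (show y < x from hx)
        obtain ⟨q2, hq21, hq22⟩ := exists_rat_btwn hxs'
        refine ⟨q1, q2, hq12, hq21, ?_⟩
        refine le_antisymm ((measure_mono ?_).trans hs'J.2.le) (zero_le)
        exact fun z hz => ⟨lt_trans hq11 hz.1, lt_trans hz.2 hq22⟩
  -- left side
  have hL : ν (Iio y) = 0 := by
    by_cases hya : μ {y} = 0
    · by_cases hLd : ∀ s : ℝ, s < y → μ (Ioo s y) ≠ 0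
      · have hcov : Iio y ⊆ ⋃ (q : ℚ) (_ : (q:ℝ) < y), Iio (q:ℝ) := by
          intro x hx
          obtain ⟨q, hq1, hq2⟩ := exists_rat_btwn (show x < y from hx)
          exact mem_iUnion₂.mpr ⟨q, hq2, hq1⟩
        refine le_antisymm ((measure_mono hcov).trans
          (measure_iUnion_null fun q => measure_iUnion_null fun hq => ?_).le) (zero_le)
        obtain ⟨d, ⟨hd1, hd2⟩, hgd⟩ := hdens q y hq (hLd q hq)
        have h0 : ν (Iio d) = 0 := hIio d hd2.le hgd
        exact le_antisymm ((measure_mono (Iio_subset_Iio hd1.le)).trans h0.le) (zero_le)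
      · push_neg at hLd
        obtain ⟨s0, hs0y, hs0⟩ := hLd
        obtain ⟨q, hq1, hq2⟩ := exists_rat_btwn hs0y
        have hqnull : μ (Ioo (q:ℝ) y) = 0 :=
          le_antisymm ((measure_mono (Ioo_subset_Ioo hq1.le le_rfl)).trans hs0.le) (zero_le)
        have hrpos : ∀ q2 : ℚ, y < (q2:ℝ) → μ (Ioo y (q2:ℝ)) ≠ 0 := by
          intro q2 hq2' h0
          refine hyV q q2 hq2 hq2' ?_
          have hcov : Ioo (q:ℝ) (q2:ℝ) ⊆ Ioo (q:ℝ) y ∪ ({y} ∪ Ioo y (q2:ℝ)) := by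
            intro x hx
            rcases lt_trichotomy x y with h | h | h
            · exact Or.inl ⟨hx.1, h⟩
            · exact Or.inr (Or.inl (by simp [h]))
            · exact Or.inr (Or.inr ⟨h, hx.2⟩)
          refine le_antisymm ((measure_mono hcov).trans ?_) (zero_le)
          calc μ (Ioo (q:ℝ) y ∪ ({y} ∪ Ioo y (q2:ℝ)))
              ≤ μ (Ioo (q:ℝ) y) + (μ {y} + μ (Ioo y (q2:ℝ))) :=
                (measure_union_le _ _).trans (by gcongr; exact measure_union_le _ _)
            _ = 0 := by simp [hqnull, hya, h0]
        exact hIio y le_rfl (hDr y hyB hya ⟨q, hq2, hqnull⟩ hrpos)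
    · exact hIio y le_rfl (hatom y hya)
  have hcompl : ν {y}ᶜ = 0 := by
    rw [← Iio_union_Ioi]
    exact le_antisymm ((measure_union_le _ _).trans (by rw [hL, hR]; simp)) (zero_le)
  have h1 := measure_add_measure_compl (μ := ν) (measurableSet_singleton y)
  rw [hcompl, add_zero, measure_univ] at h1
  exact h1

end Helpers

section Key

variable {Ω : Type*} {mΩ : MeasurableSpace Ω}

/-- If for all `t` outside a `(P.map Y)`-null set the indicator `1_{Y ≥ t}` is a.s. equal to its
conditional expectation given `σ(W)`, then `Y` is a.s. a measurable function of `W`. -/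
lemma key_funfactor {β : Type*} [MeasurableSpace β]
    (P : Measure Ω) [IsProbabilityMeasure P] {Y : Ω → ℝ} {W : Ω → β}
    (hY : Measurable Y) (hW : Measurable W)
    {B : Set ℝ} (hBm : MeasurableSet B) (hB0 : P.map Y B = 0)
    (hgood : ∀ t, t ∉ B →
      (fun ω => if t ≤ Y ω then (1:ℝ) else 0) =ᵐ[P]
        P[fun ω => if t ≤ Y ω then (1:ℝ) else 0 | MeasurableSpace.comap W inferInstance]) :
    ∃ g : β → ℝ, Measurable g ∧ ∀ᵐ ω ∂P, Y ω = g (W ω) := by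
  classical
  set μ : Measure ℝ := P.map Y with hμdef
  haveI : IsProbabilityMeasure μ := Measure.isProbabilityMeasure_map hY.aemeasurable
  set κ : Kernel β ℝ := condDistrib Y W P with hκdef
  haveI : ∀ b, IsProbabilityMeasure (κ b) := fun b => IsMarkovKernel.isProbabilityMeasure b
  -- indicator form
  have hind : ∀ t : ℝ, (Y ⁻¹' Ici t).indicator (fun _ => (1:ℝ))
      = fun ω => if t ≤ Y ω then (1:ℝ) else 0 := by
    intro t; funext ω
    simp [Set.indicator_apply, mem_preimage, mem_Ici]
  -- null sets are null for the kernel a.e.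
  have hnull : ∀ s : Set ℝ, MeasurableSet s → μ s = 0 → ∀ᵐ ω ∂P, κ (W ω) s = 0 := by
    intro s hs h0
    have h1 : (fun ω => (κ (W ω) s).toReal) =ᵐ[P] _ := condDistrib_ae_eq_condExp (μ := P) hW hY hs
    have hint : Integrable (fun ω => (κ (W ω) s).toReal) P :=
      integrable_toReal_condDistrib hW.aemeasurable hs
    have hI : ∫ ω, (κ (W ω) s).toReal ∂P = 0 := by
      rw [integral_congr_ae h1, integral_condExp hW.comap_le, integral_indicator (hY hs)]
      simp only [setIntegral_const, smul_eq_mul, mul_one, measureReal_def]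
      rw [← Measure.map_apply hY hs, ← hμdef, h0]
      simp
    have h2 : (fun ω => (κ (W ω) s).toReal) =ᵐ[P] 0 :=
      (integral_eq_zero_iff_of_nonneg_ae
        (Eventually.of_forall fun ω => ENNReal.toReal_nonneg) hint).mp hI
    filter_upwards [h2] with ω hω
    have := measure_ne_top (κ (W ω)) s
    rw [Pi.zero_apply] at hω
    exact (ENNReal.toReal_eq_zero_iff _).mp hω |>.resolve_right this
  -- good t's
  have hgd : ∀ t, t ∉ B → ∀ᵐ ω ∂P, κ (W ω) (Ici t) = (if t ≤ Y ω then (1:ℝ≥0∞) else 0) := by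
    intro t ht
    have h1 := condDistrib_ae_eq_condExp (μ := P) hW hY (measurableSet_Ici (a := t))
    rw [show Y ⁻¹' Ici t = Y ⁻¹' Ici t from rfl] at h1
    have h1' : (fun ω => (κ (W ω) (Ici t)).toReal) =ᵐ[P]
        P[fun ω => if t ≤ Y ω then (1:ℝ) else 0 | MeasurableSpace.comap W inferInstance] := by
      rw [← hind t]
      exact h1
    filter_upwards [h1'.trans (hgood t ht).symm] with ω hω
    by_cases hty : t ≤ Y ω
    · rw [if_pos hty] at hω ⊢
      exact (ENNReal.toReal_eq_one_iff _).mp hω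
    · rw [if_neg hty] at hω ⊢
      exact ((ENNReal.toReal_eq_zero_iff _).mp hω).resolve_right (measure_ne_top _ _)
  -- atoms are countable
  have hAc : Set.Countable {t : ℝ | μ {t} ≠ 0} := by
    have h := Measure.countable_meas_level_set_pos (μ := μ) (g := id) measurable_id
    refine h.mono ?_
    intro t ht
    simp only [mem_setOf_eq] at ht ⊢
    have he : {a : ℝ | id a = t} = {t} := by ext a; simp
    rw [he]
    exact pos_iff_ne_zero.mpr ht
  -- "right endpoints of null gaps" are countable
  set DR : Set ℝ := {t | μ {t} = 0 ∧ (∃ q : ℚ, (q:ℝ) < t ∧ μ (Ioo (q:ℝ) t) = 0) ∧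
      ∀ q : ℚ, t < (q:ℝ) → μ (Ioo t (q:ℝ)) ≠ 0} with hDRdef
  have hDRc : DR.Countable := by
    set F : ℝ → ℚ := fun t =>
      if h : ∃ q : ℚ, (q:ℝ) < t ∧ μ (Ioo (q:ℝ) t) = 0 then h.choose else 0 with hFdef
    have key : ∀ t1 ∈ DR, ∀ t2 ∈ DR, t1 < t2 → F t1 ≠ F t2 := by
      intro t1 h1 t2 h2 hlt heq
      obtain ⟨-, hex1, hpos1⟩ := h1
      obtain ⟨-, hex2, hpos2⟩ := h2
      have hF1 : F t1 = hex1.choose := dif_pos hex1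
      have hF2 : F t2 = hex2.choose := dif_pos hex2
      obtain ⟨hc1, -⟩ := hex1.choose_spec
      obtain ⟨-, hc2⟩ := hex2.choose_spec
      obtain ⟨q', hq'1, hq'2⟩ := exists_rat_btwn hlt
      refine hpos1 q' hq'1 ?_
      refine le_antisymm ((measure_mono ?_).trans hc2.le) (zero_le)
      intro z hz
      refine ⟨?_, lt_trans hz.2 hq'2⟩
      have hlt1 : ((hex2.choose : ℚ) : ℝ) < t1 := by
        rw [← hF2, ← heq, hF1]; exact hc1
      exact lt_trans hlt1 hz.1
    have hinj : Set.InjOn F DR := by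
      intro t1 h1 t2 h2 heq
      by_contra hne
      rcases lt_or_gt_of_ne hne with h | h
      · exact key t1 h1 t2 h2 h heq
      · exact key t2 h2 t1 h1 h heq.symm
    exact (Set.mapsTo_univ F DR).countable_of_injOn hinj countable_univ
  -- density points chosen outside B
  set pick : ℚ × ℚ → ℝ := fun r =>
    if h : ((Ioo (r.1:ℝ) (r.2:ℝ)) \ B).Nonempty then h.some else 0 with hpickdef
  set D1 : Set ℝ := pick '' {r : ℚ × ℚ | ((Ioo (r.1:ℝ) (r.2:ℝ)) \ B).Nonempty} with hD1def
  have hD1c : D1.Countable := (Set.to_countable _).image _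
  have hD1B : ∀ d ∈ D1, d ∉ B := by
    rintro d ⟨r, hr, rfl⟩
    have hp : pick r = hr.some := dif_pos hr
    rw [hp]
    exact hr.some_mem.2
  have hdens : ∀ t1 t2 : ℝ, t1 < t2 → μ (Ioo t1 t2) ≠ 0 →
      ∃ d ∈ D1, t1 < d ∧ d < t2 := by
    intro t1 t2 hlt h0
    have hex : ∃ r : ℚ × ℚ, (t1 < (r.1:ℝ) ∧ (r.2:ℝ) < t2) ∧ μ (Ioo (r.1:ℝ) (r.2:ℝ)) ≠ 0 := by
      by_contra h
      push_neg at h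
      refine h0 ?_
      have hcov : Ioo t1 t2 ⊆
          ⋃ (r : ℚ × ℚ) (_ : t1 < (r.1:ℝ) ∧ (r.2:ℝ) < t2), Ioo (r.1:ℝ) (r.2:ℝ) := by
        intro x hx
        obtain ⟨q1, h11, h12⟩ := exists_rat_btwn hx.1
        obtain ⟨q2, h21, h22⟩ := exists_rat_btwn hx.2
        exact mem_iUnion₂.mpr ⟨(q1, q2), ⟨h11, h22⟩, h12, h21⟩
      have hnl : μ (⋃ (r : ℚ × ℚ) (_ : t1 < (r.1:ℝ) ∧ (r.2:ℝ) < t2),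
          Ioo (r.1:ℝ) (r.2:ℝ)) = 0 :=
        measure_iUnion_null fun r => measure_iUnion_null fun hr => h r hr
      exact le_antisymm ((measure_mono hcov).trans hnl.le) (zero_le)
    obtain ⟨r, ⟨hr1, hr2⟩, hrpos⟩ := hex
    have hne : ((Ioo (r.1:ℝ) (r.2:ℝ)) \ B).Nonempty := by
      rw [Set.nonempty_iff_ne_empty]
      intro hemp
      have hsub : Ioo (r.1:ℝ) (r.2:ℝ) ⊆ B := by rwa [Set.diff_eq_empty] at hemp
      exact hrpos (le_antisymm ((measure_mono hsub).trans hB0.le) (zero_le))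
    have hmem : pick r ∈ Ioo (r.1:ℝ) (r.2:ℝ) \ B := by
      have hp : pick r = hne.some := dif_pos hne
      rw [hp]; exact hne.some_mem
    exact ⟨pick r, mem_image_of_mem _ hne, lt_trans hr1 hmem.1.1, lt_trans hmem.1.2 hr2⟩
  -- the countable good set
  set D : Set ℝ := D1 ∪ ({t : ℝ | μ {t} ≠ 0} ∪ (DR \ B)) with hDdef
  have hDc : D.Countable := hD1c.union (hAc.union (hDRc.mono Set.diff_subset))
  have hDB : ∀ d ∈ D, d ∉ B := by
    intro d hd
    simp only [hDdef, Set.mem_union] at hd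
    rcases hd with h | h | h
    · exact hD1B d h
    · intro hdB
      exact h (le_antisymm
        ((measure_mono (singleton_subset_iff.mpr hdB)).trans hB0.le) (zero_le))
    · exact h.2
  -- the null open set V
  set V : Set ℝ := ⋃ (r : ℚ × ℚ) (_ : μ (Ioo (r.1:ℝ) (r.2:ℝ)) = 0), Ioo (r.1:ℝ) (r.2:ℝ)
    with hVdef
  have hVm : MeasurableSet V :=
    MeasurableSet.iUnion fun r => MeasurableSet.iUnion fun _ => measurableSet_Ioo
  have hV0 : μ V = 0 := measure_iUnion_null fun r => measure_iUnion_null fun h => h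
  -- almost-everywhere events
  have hgood_all : ∀ᵐ ω ∂P, ∀ d ∈ D, κ (W ω) (Ici d) = (if d ≤ Y ω then (1:ℝ≥0∞) else 0) :=
    (ae_ball_iff hDc).mpr fun d hd => hgd d (hDB d hd)
  have hBnull : ∀ᵐ ω ∂P, κ (W ω) B = 0 := hnull B hBm hB0
  have hVnull : ∀ᵐ ω ∂P, κ (W ω) V = 0 := hnull V hVm hV0
  have hYB : ∀ᵐ ω ∂P, Y ω ∉ B := by
    rw [ae_iff]
    have he : {ω | ¬ Y ω ∉ B} = Y ⁻¹' B := by ext ω; simp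
    rw [he, ← Measure.map_apply hY hBm]
    exact hB0
  have hYV : ∀ᵐ ω ∂P, Y ω ∉ V := by
    rw [ae_iff]
    have he : {ω | ¬ Y ω ∉ V} = Y ⁻¹' V := by ext ω; simp
    rw [he, ← Measure.map_apply hY hVm]
    exact hV0
  -- the function g
  haveI : IsMarkovKernel κ := by rw [hκdef]; infer_instance
  set g : β → ℝ := fun w => Real.tan (∫ x, Real.arctan x ∂(κ w)) with hgdef
  have hgm : Measurable g := by
    have h1 : StronglyMeasurable fun w => ∫ x, Real.arctan x ∂(κ w) :=
      MeasureTheory.StronglyMeasurable.integral_kernel_prod_right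
        (f := fun (_ : β) (x : ℝ) => Real.arctan x)
        (Real.continuous_arctan.stronglyMeasurable.comp_measurable measurable_snd)
    have htan : Measurable Real.tan := by
      have he : Real.tan = fun x => Real.sin x / Real.cos x :=
        funext fun x => Real.tan_eq_sin_div_cos x
      rw [he]; exact Real.measurable_sin.div Real.measurable_cos
    exact htan.comp h1.measurable
  refine ⟨g, hgm, ?_⟩
  filter_upwards [hgood_all, hBnull, hVnull, hYB, hYV] with ω h1 h2 h3 h4 h5
  have hdirac : κ (W ω) {Y ω} = 1 := by
    refine measure_singleton_eq_one_aux μ (κ (W ω)) (Y ω) (B := B) ?_ ?_ ?_ h2 h4 ?_ ?_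
    · intro t1 t2 hlt h0
      obtain ⟨d, hdD1, hd1, hd2⟩ := hdens t1 t2 hlt h0
      exact ⟨d, ⟨hd1, hd2⟩, h1 d (by simp only [hDdef, Set.mem_union]; exact Or.inl hdD1)⟩
    · intro t ht
      exact h1 t (by simp only [hDdef, Set.mem_union]; exact Or.inr (Or.inl ht))
    · intro t htB ht0 hex hpos
      exact h1 t (by
        simp only [hDdef, Set.mem_union]
        exact Or.inr (Or.inr ⟨⟨ht0, hex, hpos⟩, htB⟩))
    · intro s hs
      refine le_antisymm ((measure_mono ?_).trans h3.le) (zero_le)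
      intro x hx
      obtain ⟨q1, q2, ha, hb, hc⟩ := hs x hx
      exact mem_iUnion₂.mpr ⟨(q1, q2), hc, ha, hb⟩
    · intro q1 q2 ha hb hc
      exact h5 (mem_iUnion₂.mpr ⟨(q1, q2), hc, ha, hb⟩)
  have hν : κ (W ω) = Measure.dirac (Y ω) := by
    ext s hs
    rw [Measure.dirac_apply' _ hs]
    by_cases hys : Y ω ∈ s
    · rw [Set.indicator_of_mem hys, Pi.one_apply]
      refine le_antisymm prob_le_one ?_
      calc (1:ℝ≥0∞) = κ (W ω) {Y ω} := hdirac.symm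
        _ ≤ κ (W ω) s := measure_mono (singleton_subset_iff.mpr hys)
    · rw [Set.indicator_of_notMem hys]
      have hcompl : κ (W ω) {Y ω}ᶜ = 0 := by
        have h1' := measure_add_measure_compl (μ := κ (W ω)) (measurableSet_singleton (Y ω))
        rw [hdirac, measure_univ] at h1'
        have h2' : (1:ℝ≥0∞) + κ (W ω) {Y ω}ᶜ = 1 + 0 := by rw [add_zero]; exact h1'
        exact (ENNReal.add_right_inj ENNReal.one_ne_top).mp h2'
      refine le_antisymm ((measure_mono ?_).trans hcompl.le) (zero_le)
      intro x hx
      simp only [mem_compl_iff, mem_singleton_iff]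
      rintro rfl
      exact hys hx
  symm
  calc g (W ω) = Real.tan (∫ x, Real.arctan x ∂(κ (W ω))) := rfl
    _ = Real.tan (Real.arctan (Y ω)) := by rw [hν, integral_dirac]
    _ = Y ω := Real.tan_arctan _

end Key

section ABC

variable {Ω : Type*} {mΩ : MeasurableSpace Ω}

/-- `aFn P Y t = P(Y ≥ t)`. -/
noncomputable def aFn (P : Measure Ω) (Y : Ω → ℝ) (t : ℝ) : ℝ :=
  ∫ ω, (if t ≤ Y ω then (1:ℝ) else 0) ∂P

/-- `bFn P Y m t = E[(E[1_{Y ≥ t}|m])²]`. -/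
noncomputable def bFn (P : Measure Ω) (Y : Ω → ℝ) (m : MeasurableSpace Ω) (t : ℝ) : ℝ :=
  ∫ ω, ((P[fun ω' => if t ≤ Y ω' then (1:ℝ) else 0 | m]) ω) ^ 2 ∂P

variable {P : Measure Ω} [IsProbabilityMeasure P] {Y : Ω → ℝ} (hY : Measurable Y)

include hY in
lemma ff_meas (t : ℝ) :
    Measurable fun ω => if t ≤ Y ω then (1:ℝ) else 0 :=
  Measurable.ite (measurableSet_le measurable_const hY) measurable_const measurable_const

lemma ff_nonneg (t : ℝ) : (0:Ω → ℝ) ≤ᵐ[P] fun ω => if t ≤ Y ω then (1:ℝ) else 0 :=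
  Eventually.of_forall fun ω => by by_cases h : t ≤ Y ω <;> simp [h]

lemma ff_le_one (t : ℝ) : (fun ω => if t ≤ Y ω then (1:ℝ) else 0) ≤ᵐ[P] fun _ => (1:ℝ) :=
  Eventually.of_forall fun ω => by by_cases h : t ≤ Y ω <;> simp [h]

lemma ff_sq (Y : Ω → ℝ) (t : ℝ) : (fun ω => (if t ≤ Y ω then (1:ℝ) else 0) ^ 2)
    = fun ω => if t ≤ Y ω then (1:ℝ) else 0 := by
  funext ω; by_cases h : t ≤ Y ω <;> simp [h]

include hY in
lemma ff_int (t : ℝ) :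
    Integrable (fun ω => if t ≤ Y ω then (1:ℝ) else 0) P :=
  integrable_of_abs_le_one (ff_meas hY t).aestronglyMeasurable
    (Eventually.of_forall fun ω => by by_cases h : t ≤ Y ω <;> simp [h])

include hY in
/-- Denominator inner integral: `∫ Var(1_{Y≥t}|m) = a - b`. -/
lemma integral_cv_den {m : MeasurableSpace Ω} (hm : m ≤ mΩ) (t : ℝ) :
    ∫ ω, (P[(fun ω' => ((if t ≤ Y ω' then (1:ℝ) else 0)
        - (P[fun ω'' => if t ≤ Y ω'' then (1:ℝ) else 0 | m]) ω') ^ 2) | m]) ω ∂P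
      = aFn P Y t - bFn P Y m t := by
  have h := integral_condVariance_eq (P := P) hm (ff_meas hY t).aestronglyMeasurable
    (ff_nonneg (P := P) (Y := Y) t) (ff_le_one (P := P) (Y := Y) t)
  rw [h, bFn, aFn]
  congr 1
  rw [← ff_sq Y t]

include hY in
/-- Numerator inner integral: `∫ Var(E[1_{Y≥t}|m₂]|m₁) = b₂ - b₁` when `m₁ ≤ m₂`. -/
lemma integral_cv_num {m₁ m₂ : MeasurableSpace Ω} (h12 : m₁ ≤ m₂) (hm₂ : m₂ ≤ mΩ) (t : ℝ) :
    ∫ ω, (P[(fun ω' => ((P[fun ω'' => if t ≤ Y ω'' then (1:ℝ) else 0 | m₂]) ω'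
        - (P[P[fun ω'' => if t ≤ Y ω'' then (1:ℝ) else 0 | m₂] | m₁]) ω') ^ 2) | m₁]) ω ∂P
      = bFn P Y m₂ t - bFn P Y m₁ t := by
  haveI : SigmaFinite (P.trim hm₂) := by infer_instance
  haveI : SigmaFinite (P.trim (h12.trans hm₂)) := by infer_instance
  obtain ⟨h0, h1⟩ := condexp_mem_Icc hm₂ (ff_int hY t) (ff_nonneg (P := P) (Y := Y) t) (ff_le_one (P := P) (Y := Y) t)
  have h := integral_condVariance_eq (P := P) (h12.trans hm₂)
    ((stronglyMeasurable_condExp.mono hm₂).aestronglyMeasurable) h0 h1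
  rw [h]
  congr 1
  refine integral_congr_ae ?_
  filter_upwards [condExp_condExp_of_le h12 hm₂
    (f := fun ω'' => if t ≤ Y ω'' then (1:ℝ) else 0) (μ := P)] with ω hω
  rw [hω]

include hY in
/-- `a - b = ∫ (1_{Y≥t} - E[1_{Y≥t}|m])²`. -/
lemma aFn_sub_bFn {m : MeasurableSpace Ω} (hm : m ≤ mΩ) (t : ℝ) :
    aFn P Y t - bFn P Y m t
      = ∫ ω, ((if t ≤ Y ω then (1:ℝ) else 0)
          - (P[fun ω'' => if t ≤ Y ω'' then (1:ℝ) else 0 | m]) ω) ^ 2 ∂P := by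
  rw [integral_sub_condexp_sq hm (ff_meas hY t).aestronglyMeasurable (ff_nonneg t)
    (ff_le_one t)]
  rw [bFn, aFn]
  congr 1
  rw [← ff_sq Y t]

include hY in
lemma bFn_le_aFn {m : MeasurableSpace Ω} (hm : m ≤ mΩ) (t : ℝ) :
    bFn P Y m t ≤ aFn P Y t := by
  have h := aFn_sub_bFn (P := P) hY hm t
  have h2 : 0 ≤ aFn P Y t - bFn P Y m t := by
    rw [h]; exact integral_nonneg fun ω => sq_nonneg _
  linarith

include hY in
/-- If `a t = b t` then the indicator is a.s. equal to its conditional expectation. -/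
lemma ff_eq_condexp_of_eq {m : MeasurableSpace Ω} (hm : m ≤ mΩ) (t : ℝ)
    (h : aFn P Y t = bFn P Y m t) :
    (fun ω => if t ≤ Y ω then (1:ℝ) else 0)
      =ᵐ[P] P[fun ω => if t ≤ Y ω then (1:ℝ) else 0 | m] := by
  have h1 : ∫ ω, ((if t ≤ Y ω then (1:ℝ) else 0)
      - (P[fun ω'' => if t ≤ Y ω'' then (1:ℝ) else 0 | m]) ω) ^ 2 ∂P = 0 := by
    rw [← aFn_sub_bFn (P := P) hY hm t]; linarith
  have hint : Integrable (fun ω => ((if t ≤ Y ω then (1:ℝ) else 0)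
      - (P[fun ω'' => if t ≤ Y ω'' then (1:ℝ) else 0 | m]) ω) ^ 2) P := by
    obtain ⟨h0, hb1⟩ := condexp_mem_Icc hm (ff_int hY t) (ff_nonneg (P := P) (Y := Y) t) (ff_le_one (P := P) (Y := Y) t)
    refine integrable_of_abs_le_one ?_ ?_
    · exact ((ff_meas hY t).aestronglyMeasurable.sub
        ((stronglyMeasurable_condExp.mono hm).aestronglyMeasurable)).pow 2
    · filter_upwards [h0, hb1] with ω hc0 hc1
      simp only [Pi.zero_apply] at hc0
      rw [abs_pow]
      refine pow_le_one₀ (abs_nonneg _) ?_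
      rw [abs_le]
      by_cases hf : t ≤ Y ω <;> simp only [hf, if_true, if_false] <;>
        constructor <;> nlinarith [hc1]
  have h2 := (integral_eq_zero_iff_of_nonneg_ae
    (Eventually.of_forall fun ω => sq_nonneg _) hint).mp h1
  filter_upwards [h2] with ω hω
  have h3 := pow_eq_zero_iff (n := 2) (by norm_num) |>.mp hω
  linarith [h3]

include hY in
lemma aFn_anti : Antitone (aFn P Y) := by
  intro t s hts
  refine integral_mono (ff_int hY s) (ff_int hY t) fun ω => ?_
  dsimp only
  split
  · rw [if_pos (le_trans hts (by assumption))]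
  · split <;> norm_num

include hY in
lemma bFn_anti {m : MeasurableSpace Ω} (hm : m ≤ mΩ) :
    Antitone (bFn P Y m) := by
  intro t s hts
  haveI : SigmaFinite (P.trim hm) := by infer_instance
  have hmono : P[fun ω' => if s ≤ Y ω' then (1:ℝ) else 0 | m]
      ≤ᵐ[P] P[fun ω' => if t ≤ Y ω' then (1:ℝ) else 0 | m] := by
    refine condExp_mono (ff_int hY s) (ff_int hY t) (Eventually.of_forall fun ω => ?_)
    dsimp only
    split
    · rw [if_pos (le_trans hts (by assumption))]
    · split <;> norm_num
  obtain ⟨h0s, h1s⟩ := condexp_mem_Icc hm (ff_int hY s) (ff_nonneg (P := P) (Y := Y) s) (ff_le_one (P := P) (Y := Y) s)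
  obtain ⟨h0t, h1t⟩ := condexp_mem_Icc hm (ff_int hY t) (ff_nonneg (P := P) (Y := Y) t) (ff_le_one (P := P) (Y := Y) t)
  have hints : Integrable
      (fun ω => ((P[fun ω' => if s ≤ Y ω' then (1:ℝ) else 0 | m]) ω)^2) P := by
    refine integrable_of_abs_le_one
      (((stronglyMeasurable_condExp.mono hm).aestronglyMeasurable).pow 2) ?_
    filter_upwards [h0s, h1s] with ω hc0 hc1
    simp only [Pi.zero_apply] at hc0
    rw [abs_pow]; exact pow_le_one₀ (abs_nonneg _) (abs_le.mpr ⟨by linarith, hc1⟩)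
  have hintt : Integrable
      (fun ω => ((P[fun ω' => if t ≤ Y ω' then (1:ℝ) else 0 | m]) ω)^2) P := by
    refine integrable_of_abs_le_one
      (((stronglyMeasurable_condExp.mono hm).aestronglyMeasurable).pow 2) ?_
    filter_upwards [h0t, h1t] with ω hc0 hc1
    simp only [Pi.zero_apply] at hc0
    rw [abs_pow]; exact pow_le_one₀ (abs_nonneg _) (abs_le.mpr ⟨by linarith, hc1⟩)
  refine integral_mono_ae hints hintt ?_
  filter_upwards [hmono, h0s] with ω h1 h2
  simp only [Pi.zero_apply] at h2
  exact pow_le_pow_left₀ h2 h1 2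

include hY in
lemma aFn_mem (t : ℝ) : 0 ≤ aFn P Y t ∧ aFn P Y t ≤ 1 := by
  constructor
  · exact integral_nonneg fun ω => by by_cases h : t ≤ Y ω <;> simp [h]
  · calc aFn P Y t ≤ ∫ _, (1:ℝ) ∂P := by
          refine integral_mono (ff_int hY t) (integrable_const 1) fun ω => ?_
          by_cases h : t ≤ Y ω <;> simp [h]
      _ = 1 := by simp

include hY in
lemma bFn_mem {m : MeasurableSpace Ω} (hm : m ≤ mΩ) (t : ℝ) :
    0 ≤ bFn P Y m t ∧ bFn P Y m t ≤ 1 := by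
  constructor
  · exact integral_nonneg fun ω => sq_nonneg _
  · obtain ⟨h0, h1⟩ := condexp_mem_Icc hm (ff_int hY t) (ff_nonneg (P := P) (Y := Y) t) (ff_le_one (P := P) (Y := Y) t)
    calc bFn P Y m t ≤ ∫ _, (1:ℝ) ∂P := by
          refine integral_mono_ae ?_ (integrable_const 1) ?_
          · refine integrable_of_abs_le_one
              (((stronglyMeasurable_condExp.mono hm).aestronglyMeasurable).pow 2) ?_
            filter_upwards [h0, h1] with ω hc0 hc1
            simp only [Pi.zero_apply] at hc0
            rw [abs_pow]; exact pow_le_one₀ (abs_nonneg _) (abs_le.mpr ⟨by linarith, hc1⟩)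
          · filter_upwards [h0, h1] with ω hc0 hc1
            simp only [Pi.zero_apply] at hc0
            calc ((P[fun ω' => if t ≤ Y ω' then (1:ℝ) else 0 | m]) ω)^2 ≤ 1^2 :=
                  pow_le_pow_left₀ hc0 hc1 2
              _ = 1 := one_pow 2
      _ = 1 := by simp

end ABC

section Bridge

variable {Ω : Type*} [mΩ : MeasurableSpace Ω]

lemma exists_fun_of_ae_eq {β : Type*} [MeasurableSpace β]
    (P : Measure Ω) [IsProbabilityMeasure P] {Y : Ω → ℝ} {W : Ω → β}
    (hY : Measurable Y) (hW : Measurable W)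
    (h : ∀ᵐ t ∂(P.map Y),
      aFn P Y t = bFn P Y (MeasurableSpace.comap W inferInstance) t) :
    ∃ g : β → ℝ, Measurable g ∧ ∀ᵐ ω ∂P, Y ω = g (W ω) := by
  obtain ⟨B, hBsub, hBm, hB0⟩ := exists_measurable_superset_of_null (ae_iff.mp h)
  refine key_funfactor P hY hW hBm hB0 ?_
  intro t ht
  have heq : aFn P Y t = bFn P Y (MeasurableSpace.comap W inferInstance) t := by
    by_contra hne
    exact ht (hBsub hne)
  exact ff_eq_condexp_of_eq hY hW.comap_le t heq

lemma den_integrable {P : Measure Ω} [IsProbabilityMeasure P] {Y : Ω → ℝ}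
    (hY : Measurable Y) {m : MeasurableSpace Ω} (hm : m ≤ mΩ) :
    Integrable (fun t => aFn P Y t - bFn P Y m t) (@Measure.map Ω ℝ mΩ _ Y P) := by
  letI : MeasurableSpace Ω := mΩ
  haveI : IsProbabilityMeasure (P.map Y) := Measure.isProbabilityMeasure_map hY.aemeasurable
  refine integrable_of_abs_le_one
    (((aFn_anti hY).measurable.sub (bFn_anti hY hm).measurable).aestronglyMeasurable) ?_
  refine Eventually.of_forall fun t => ?_
  obtain ⟨ha0, ha1⟩ := aFn_mem hY (P := P) t
  obtain ⟨hb0, hb1⟩ := bFn_mem hY hm (P := P) t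
  have hba := bFn_le_aFn hY hm (P := P) t
  show |aFn P Y t - bFn P Y m t| ≤ 1
  rw [abs_le]
  constructor <;> linarith

lemma num_integrable {P : Measure Ω} [IsProbabilityMeasure P] {Y : Ω → ℝ}
    (hY : Measurable Y) {m₁ m₂ : MeasurableSpace Ω} (hm₁ : m₁ ≤ mΩ) (hm₂ : m₂ ≤ mΩ) :
    Integrable (fun t => bFn P Y m₂ t - bFn P Y m₁ t) (@Measure.map Ω ℝ mΩ _ Y P) := by
  letI : MeasurableSpace Ω := mΩ
  haveI : IsProbabilityMeasure (P.map Y) := Measure.isProbabilityMeasure_map hY.aemeasurable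
  refine integrable_of_abs_le_one
    (((bFn_anti hY hm₂).measurable.sub (bFn_anti hY hm₁).measurable).aestronglyMeasurable) ?_
  refine Eventually.of_forall fun t => ?_
  obtain ⟨h10, h11⟩ := bFn_mem hY hm₁ (P := P) t
  obtain ⟨h20, h21⟩ := bFn_mem hY hm₂ (P := P) t
  show |bFn P Y m₂ t - bFn P Y m₁ t| ≤ 1
  rw [abs_le]
  constructor <;> linarith

end Bridge

/-- If `Y` is not almost surely equal to a measurable function of `X`,
then `T(Y,Z|X) = 1` if and only if `Y` is almost surely equal to a measurable function
of `(X,Z)`. -/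
theorem Tcoef_eq_one_iff_function {p q : ℕ}
    {Ω : Type*} [MeasurableSpace Ω] (P : Measure Ω) [IsProbabilityMeasure P]
    (Y : Ω → ℝ) (X : Ω → (Fin p → ℝ)) (Z : Ω → (Fin q → ℝ))
    (hY : Measurable Y) (hX : Measurable X) (hZ : Measurable Z)
    (hYnotfun : ¬ ∃ h : (Fin p → ℝ) → ℝ, Measurable h ∧ ∀ᵐ ω ∂P, Y ω = h (X ω)) :
    Tcoef P Y X Z = 1 ↔
      ∃ g : (Fin p → ℝ) × (Fin q → ℝ) → ℝ, Measurable g ∧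
        ∀ᵐ ω ∂P, Y ω = g (X ω, Z ω) := by
  have hW : Measurable fun ω => (X ω, Z ω) := hX.prodMk hZ
  have hm₁ : MeasurableSpace.comap X inferInstance ≤ ‹MeasurableSpace Ω› := hX.comap_le
  have hm₂ : MeasurableSpace.comap (fun ω' => (X ω', Z ω')) inferInstance
      ≤ ‹MeasurableSpace Ω› := hW.comap_le
  have h12 : MeasurableSpace.comap X inferInstance
      ≤ MeasurableSpace.comap (fun ω' => (X ω', Z ω')) inferInstance := by
    calc MeasurableSpace.comap X inferInstance
        = MeasurableSpace.comap (fun ω' => (X ω', Z ω'))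
            (MeasurableSpace.comap Prod.fst inferInstance) := by
          rw [MeasurableSpace.comap_comp]
          rfl
      _ ≤ _ := MeasurableSpace.comap_mono measurable_fst.comap_le
  haveI hμP : IsProbabilityMeasure (P.map Y) := Measure.isProbabilityMeasure_map hY.aemeasurable
  have hTc : Tcoef P Y X Z
      = (∫ t, (bFn P Y (MeasurableSpace.comap (fun ω' => (X ω', Z ω')) inferInstance) t
            - bFn P Y (MeasurableSpace.comap X inferInstance) t) ∂(P.map Y))
        / (∫ t, (aFn P Y t
            - bFn P Y (MeasurableSpace.comap X inferInstance) t) ∂(P.map Y)) := by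
    unfold Tcoef condVariance
    congr 1
    · exact integral_congr_ae (Eventually.of_forall fun t => integral_cv_num hY h12 hm₂ t)
    · exact integral_congr_ae (Eventually.of_forall fun t => integral_cv_den hY hm₁ t)
  have hD : Integrable (fun t => aFn P Y t
      - bFn P Y (MeasurableSpace.comap X inferInstance) t) (P.map Y) :=
    den_integrable hY hm₁
  have hD2 : Integrable (fun t => aFn P Y t
      - bFn P Y (MeasurableSpace.comap (fun ω' => (X ω', Z ω')) inferInstance) t) (P.map Y) :=
    den_integrable hY hm₂
  have hN : Integrable (fun t =>
      bFn P Y (MeasurableSpace.comap (fun ω' => (X ω', Z ω')) inferInstance) t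
        - bFn P Y (MeasurableSpace.comap X inferInstance) t) (P.map Y) :=
    num_integrable hY hm₁ hm₂
  have hDne : (∫ t, (aFn P Y t
      - bFn P Y (MeasurableSpace.comap X inferInstance) t) ∂(P.map Y)) ≠ 0 := by
    intro h0
    have hae := (integral_eq_zero_iff_of_nonneg_ae
      (Eventually.of_forall fun t => sub_nonneg.mpr (bFn_le_aFn hY hm₁ t)) hD).mp h0
    have hae2 : ∀ᵐ t ∂(P.map Y), aFn P Y t
        = bFn P Y (MeasurableSpace.comap X inferInstance) t := by
      filter_upwards [hae] with t ht
      have ht' : aFn P Y t - bFn P Y (MeasurableSpace.comap X inferInstance) t = 0 := ht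
      linarith
    exact hYnotfun (exists_fun_of_ae_eq P hY hX hae2)
  constructor
  · intro hT1
    rw [hTc] at hT1
    have hND : (∫ t, (bFn P Y (MeasurableSpace.comap (fun ω' => (X ω', Z ω')) inferInstance) t
          - bFn P Y (MeasurableSpace.comap X inferInstance) t) ∂(P.map Y))
        = (∫ t, (aFn P Y t
          - bFn P Y (MeasurableSpace.comap X inferInstance) t) ∂(P.map Y)) := by
      field_simp [hDne] at hT1
      exact hT1
    have hzero : ∫ t, (aFn P Y t
        - bFn P Y (MeasurableSpace.comap (fun ω' => (X ω', Z ω')) inferInstance) t)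
        ∂(P.map Y) = 0 := by
      have hsub := integral_sub hD hN
      have he : (fun t => (aFn P Y t - bFn P Y (MeasurableSpace.comap X inferInstance) t)
          - (bFn P Y (MeasurableSpace.comap (fun ω' => (X ω', Z ω')) inferInstance) t
            - bFn P Y (MeasurableSpace.comap X inferInstance) t))
          = fun t => aFn P Y t
            - bFn P Y (MeasurableSpace.comap (fun ω' => (X ω', Z ω')) inferInstance) t := by
        funext t; ring
      rw [he] at hsub
      rw [hsub, hND, sub_self]
    have hae := (integral_eq_zero_iff_of_nonneg_ae
      (Eventually.of_forall fun t => sub_nonneg.mpr (bFn_le_aFn hY hm₂ t)) hD2).mp hzero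
    have hae2 : ∀ᵐ t ∂(P.map Y), aFn P Y t
        = bFn P Y (MeasurableSpace.comap (fun ω' => (X ω', Z ω')) inferInstance) t := by
      filter_upwards [hae] with t ht
      have ht' : aFn P Y t
          - bFn P Y (MeasurableSpace.comap (fun ω' => (X ω', Z ω')) inferInstance) t = 0 := ht
      linarith
    obtain ⟨g, hgm, hgae⟩ := exists_fun_of_ae_eq P hY hW hae2
    exact ⟨g, hgm, hgae⟩
  · rintro ⟨g, hgm, hgae⟩
    have hbc : ∀ t, bFn P Y (MeasurableSpace.comap (fun ω' => (X ω', Z ω')) inferInstance) t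
        = aFn P Y t := by
      intro t
      haveI : SigmaFinite (P.trim hm₂) := by infer_instance
      have hff : (fun ω => if t ≤ Y ω then (1:ℝ) else 0)
          =ᵐ[P] fun ω => if t ≤ g (X ω, Z ω) then (1:ℝ) else 0 := by
        filter_upwards [hgae] with ω h; rw [h]
      have hsm : StronglyMeasurable[MeasurableSpace.comap (fun ω' => (X ω', Z ω')) inferInstance]
          fun ω => if t ≤ g (X ω, Z ω) then (1:ℝ) else 0 := by
        have hWc : Measurable[MeasurableSpace.comap (fun ω' => (X ω', Z ω')) inferInstance]
            fun ω' => (X ω', Z ω') := Measurable.of_comap_le le_rfl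
        have hφ : Measurable fun w : (Fin p → ℝ) × (Fin q → ℝ) =>
            if t ≤ g w then (1:ℝ) else 0 :=
          Measurable.ite (measurableSet_le measurable_const hgm)
            measurable_const measurable_const
        exact (hφ.comp hWc).stronglyMeasurable
      have hgint : Integrable (fun ω => if t ≤ g (X ω, Z ω) then (1:ℝ) else 0) P := by
        refine integrable_of_abs_le_one (hsm.mono hm₂).aestronglyMeasurable ?_
        exact Eventually.of_forall fun ω => by by_cases h : t ≤ g (X ω, Z ω) <;> simp [h]
      have hce : P[fun ω => if t ≤ Y ω then (1:ℝ) else 0 |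
            MeasurableSpace.comap (fun ω' => (X ω', Z ω')) inferInstance]
          =ᵐ[P] fun ω => if t ≤ Y ω then (1:ℝ) else 0 := by
        calc P[fun ω => if t ≤ Y ω then (1:ℝ) else 0 |
              MeasurableSpace.comap (fun ω' => (X ω', Z ω')) inferInstance]
            =ᵐ[P] P[fun ω => if t ≤ g (X ω, Z ω) then (1:ℝ) else 0 |
              MeasurableSpace.comap (fun ω' => (X ω', Z ω')) inferInstance] :=
              condExp_congr_ae hff
          _ = fun ω => if t ≤ g (X ω, Z ω) then (1:ℝ) else 0 :=
              condExp_of_stronglyMeasurable hm₂ hsm hgint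
          _ =ᵐ[P] fun ω => if t ≤ Y ω then (1:ℝ) else 0 := hff.symm
      rw [bFn]
      have hsq : (fun ω => ((P[fun ω' => if t ≤ Y ω' then (1:ℝ) else 0 |
            MeasurableSpace.comap (fun ω' => (X ω', Z ω')) inferInstance]) ω) ^ 2)
          =ᵐ[P] fun ω => (if t ≤ Y ω then (1:ℝ) else 0) ^ 2 := by
        filter_upwards [hce] with ω h; rw [h]
      rw [integral_congr_ae hsq, ff_sq Y t]
      rfl
    rw [hTc]
    simp only [hbc]
    exact div_self hDne
end

section
/- Let Y be a real-valued random variable and X a random vector in ℝ^p, on the same probability space, and let μ be the law of Y. Then ∫ E[Var(1_{Y ≥ t} | X)] dμ(t) = 0 if and only if there exists a measurable function h : ℝ^p → ℝ such that Y = h(X) almost surely. -/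
open MeasureTheory ProbabilityTheory Filter Set
open scoped NNReal Topology

lemma aux_null_Sq (μ : Measure ℝ) [IsFiniteMeasure μ] (q : ℝ) :
    μ {y | q < y ∧ μ (Ioc q y) = 0} = 0 := by
  set S : Set ℝ := {y | q < y ∧ μ (Ioc q y) = 0} with hS
  by_cases hB : BddAbove S
  · rcases eq_empty_or_nonempty S with h | hne
    · simp [h]
    set s := sSup S with hs
    have hIoo : μ (Ioo q s) = 0 := by
      have hsub : Ioo q s ⊆ ⋃ n : ℕ, Ioc q (s - 1/(n+1)) := by
        intro x hx
        obtain ⟨n, hn⟩ := exists_nat_one_div_lt (show (0:ℝ) < s - x by linarith [hx.2])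
        exact mem_iUnion.2 ⟨n, mem_Ioc.2 ⟨hx.1, by push_cast at hn ⊢; linarith⟩⟩
      refine measure_mono_null hsub (measure_iUnion_null fun n => ?_)
      rcases le_or_gt (s - 1/(n+1)) q with h | h
      · rw [Ioc_eq_empty (by exact fun hc => absurd hc (not_lt.2 h))]; exact measure_empty
      · have hlt : s - 1/(n+1) < s := by
          have : (0:ℝ) < 1/(n+1) := by positivity
          linarith
        obtain ⟨y, hyS, hy⟩ := exists_lt_of_lt_csSup hne hlt
        exact measure_mono_null (Ioc_subset_Ioc_right hy.le) hyS.2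
    by_cases hsS : s ∈ S
    · exact measure_mono_null (fun y (hy : y ∈ S) => mem_Ioc.2 ⟨hy.1, le_csSup hB hy⟩) hsS.2
    · refine measure_mono_null (fun y (hy : y ∈ S) => ?_) hIoo
      exact mem_Ioo.2 ⟨hy.1, lt_of_le_of_ne (le_csSup hB hy) (fun h => hsS (h ▸ hy))⟩
  · have hsub : S ⊆ ⋃ n : ℕ, Ioc q n := by
      intro x hx
      obtain ⟨n, hn⟩ := exists_nat_ge x
      exact mem_iUnion.2 ⟨n, mem_Ioc.2 ⟨hx.1, hn⟩⟩
    refine measure_mono_null hsub (measure_iUnion_null fun n => ?_)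
    rcases not_bddAbove_iff.1 hB (n : ℝ) with ⟨y, hyS, hy⟩
    exact measure_mono_null (Ioc_subset_Ioc_right hy.le) hyS.2

lemma aux_isLeast (μ : Measure ℝ) [IsFiniteMeasure μ] :
    ∀ᵐ y ∂μ, IsLeast {z | (μ (Iic y)).toReal ≤ (μ (Iic z)).toReal} y := by
  rw [ae_iff]
  refine measure_mono_null (fun y hy => ?_)
    (measure_iUnion_null (fun q : ℚ => aux_null_Sq μ (q : ℝ)))
  simp only [mem_setOf_eq] at hy
  have hmem : y ∈ {z | (μ (Iic y)).toReal ≤ (μ (Iic z)).toReal} := by simp [mem_setOf_eq]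
  have hnlb : ¬ ∀ z ∈ {z | (μ (Iic y)).toReal ≤ (μ (Iic z)).toReal}, y ≤ z := by
    intro h; exact hy ⟨hmem, h⟩
  push_neg at hnlb
  obtain ⟨z, hz, hzy⟩ := hnlb
  have hzy' : z < y := hzy
  have heq : μ (Iic z) = μ (Iic y) := by
    have h1 : (μ (Iic z)).toReal ≤ (μ (Iic y)).toReal :=
      ENNReal.toReal_mono (measure_ne_top _ _) (measure_mono (Iic_subset_Iic.2 hzy'.le))
    have := le_antisymm h1 hz
    exact (ENNReal.toReal_eq_toReal_iff' (measure_ne_top _ _) (measure_ne_top _ _)).1 this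
  have hIoc : μ (Ioc z y) = 0 := by
    have := measure_diff (Iic_subset_Iic.2 hzy'.le) measurableSet_Iic.nullMeasurableSet
      (measure_ne_top μ _)
    rw [Iic_sdiff_Iic] at this
    rw [this, heq, tsub_self]
  obtain ⟨q, hq1, hq2⟩ := exists_rat_btwn hzy'
  exact mem_iUnion.2 ⟨q, hq2, measure_mono_null (Ioc_subset_Ioc_left hq1.le) hIoc⟩

section Aux

variable {p : ℕ} {Ω : Type*} [MeasurableSpace Ω] (P : Measure Ω) [IsProbabilityMeasure P]
  (Y : Ω → ℝ) (X : Ω → (Fin p → ℝ))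

/-- indicator form -/
lemma aux_indicator_eq (t : ℝ) :
    (Y ⁻¹' Ici t).indicator (fun _ => (1:ℝ)) = fun ω' => if t ≤ Y ω' then (1:ℝ) else 0 := by
  ext ω
  by_cases hc : t ≤ Y ω <;>
    simp [Set.indicator_apply, Set.mem_preimage, Set.mem_Ici, hc]

lemma aux_condexp_eq (hY : Measurable Y) (hX : Measurable X) (t : ℝ) :
    (fun ω => (condDistrib Y X P (X ω) (Ici t)).toReal) =ᵐ[P]
      P[(fun ω' => if t ≤ Y ω' then (1:ℝ) else 0) | MeasurableSpace.comap X inferInstance] := by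
  have := condDistrib_ae_eq_condExp (μ := P) hX hY (measurableSet_Ici (a := t))
  simp only [measureReal_def] at this
  rwa [aux_indicator_eq Y t] at this

lemma aux_joint_meas :
    Measurable (fun q : ℝ × (Fin p → ℝ) => condDistrib Y X P q.2 (Ici q.1)) := by
  have ht : MeasurableSet {q : (ℝ × (Fin p → ℝ)) × ℝ | q.1.1 ≤ q.2} :=
    measurableSet_le (measurable_fst.comp measurable_fst) measurable_snd
  have h2 := Kernel.measurable_kernel_prodMk_left
    (κ := (condDistrib Y X P).comap Prod.snd measurable_snd) ht
  have hset : ∀ a : ℝ × (Fin p → ℝ),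
      (Prod.mk a ⁻¹' {q : (ℝ × (Fin p → ℝ)) × ℝ | q.1.1 ≤ q.2}) = Ici a.1 := by
    intro a; ext y; simp [Set.mem_Ici]
  simp only [hset, Kernel.comap_apply] at h2
  exact h2

end Aux

/-- For a real random variable `Y` and a random vector `X` in `ℝ^p`,
`∫ E[Var(1_{Y≥t} | X)] dμ(t) = 0` (with `μ` the law of `Y`) if and only if there is a
measurable `h : ℝ^p → ℝ` with `Y = h(X)` almost surely. -/
theorem integral_expected_condVar_eq_zero_iff {p : ℕ}
    {Ω : Type*} [MeasurableSpace Ω] (P : Measure Ω) [IsProbabilityMeasure P]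
    (Y : Ω → ℝ) (X : Ω → (Fin p → ℝ))
    (hY : Measurable Y) (hX : Measurable X) :
    (∫ t, ∫ ω, condVariance P (MeasurableSpace.comap X inferInstance)
        (fun ω' => if t ≤ Y ω' then (1 : ℝ) else 0) ω ∂P ∂(Measure.map Y P)) = 0 ↔
    ∃ h : (Fin p → ℝ) → ℝ, Measurable h ∧ ∀ᵐ ω ∂P, Y ω = h (X ω) := by
  have hm : MeasurableSpace.comap X inferInstance ≤ ‹MeasurableSpace Ω› := hX.comap_le
  haveI : SigmaFinite (P.trim hm) := inferInstance
  haveI : IsProbabilityMeasure (Measure.map Y P) := Measure.isProbabilityMeasure_map hY.aemeasurable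
  have hf_meas : ∀ t : ℝ, Measurable (fun ω' => if t ≤ Y ω' then (1:ℝ) else 0) := by
    intro t
    exact Measurable.ite (hY measurableSet_Ici) measurable_const measurable_const
  have hf_int : ∀ t : ℝ, Integrable (fun ω' => if t ≤ Y ω' then (1:ℝ) else 0) P := by
    intro t
    refine Integrable.mono' (integrable_const 1) (hf_meas t).aestronglyMeasurable ?_
    refine ae_of_all _ fun ω => ?_
    by_cases h : t ≤ Y ω <;> simp [h]
  constructor
  · intro hzero
    -- abbreviations as plain terms
    have hκ01 : ∀ (x : Fin p → ℝ) (t : ℝ),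
        (condDistrib Y X P x (Ici t)).toReal ≤ 1 := by
      intro x t
      have h1 : condDistrib Y X P x (Ici t) ≤ 1 := prob_le_one
      calc (condDistrib Y X P x (Ici t)).toReal ≤ (1 : ENNReal).toReal :=
            ENNReal.toReal_mono ENNReal.one_ne_top h1
        _ = 1 := ENNReal.toReal_one
    have hGf_meas : Measurable (fun q : ℝ × (Fin p → ℝ) =>
        (condDistrib Y X P q.2 (Ici q.1)).toReal) :=
      (aux_joint_meas P Y X).ennreal_toReal
    have hF1 : Measurable (fun q : ℝ × Ω => if q.1 ≤ Y q.2 then (1:ℝ) else 0) :=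
      Measurable.ite (measurableSet_le measurable_fst (hY.comp measurable_snd))
        measurable_const measurable_const
    have hF2 : Measurable (fun q : ℝ × Ω => (condDistrib Y X P (X q.2) (Ici q.1)).toReal) :=
      hGf_meas.comp (measurable_fst.prodMk (hX.comp measurable_snd))
    have hdiff_meas : Measurable (fun q : ℝ × Ω =>
        ((if q.1 ≤ Y q.2 then (1:ℝ) else 0) - (condDistrib Y X P (X q.2) (Ici q.1)).toReal) ^ 2) :=
      (hF1.sub hF2).pow_const 2
    have hbound : ∀ (t : ℝ) (ω : Ω),
        ((if t ≤ Y ω then (1:ℝ) else 0) - (condDistrib Y X P (X ω) (Ici t)).toReal) ^ 2 ≤ 1 := by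
      intro t ω
      have h1 : (0:ℝ) ≤ (condDistrib Y X P (X ω) (Ici t)).toReal := ENNReal.toReal_nonneg
      have h2 := hκ01 (X ω) t
      by_cases hc : t ≤ Y ω <;> simp only [hc, if_true, if_false] <;> nlinarith
    have hint2 : ∀ t : ℝ, Integrable (fun ω =>
        ((if t ≤ Y ω then (1:ℝ) else 0) - (condDistrib Y X P (X ω) (Ici t)).toReal) ^ 2) P := by
      intro t
      refine Integrable.mono' (integrable_const 1)
        ((hdiff_meas.comp (measurable_const.prodMk measurable_id)).aestronglyMeasurable) ?_
      refine ae_of_all _ fun ω => ?_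
      rw [Real.norm_eq_abs, abs_of_nonneg (sq_nonneg _)]
      exact hbound t ω
    -- the inner integral equals the L² distance to the conditional expectation
    have hIJ : ∀ t : ℝ, ∫ ω, condVariance P (MeasurableSpace.comap X inferInstance)
          (fun ω' => if t ≤ Y ω' then (1:ℝ) else 0) ω ∂P
        = ∫ ω, ((if t ≤ Y ω then (1:ℝ) else 0)
            - (condDistrib Y X P (X ω) (Ici t)).toReal) ^ 2 ∂P := by
      intro t
      have hcd := aux_condexp_eq P Y X hY hX t
      have hsq_congr : (fun ω => ((if t ≤ Y ω then (1:ℝ) else 0) -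
          (P[(fun ω' => if t ≤ Y ω' then (1:ℝ) else 0)|MeasurableSpace.comap X inferInstance]) ω)
            ^ 2) =ᵐ[P]
          (fun ω => ((if t ≤ Y ω then (1:ℝ) else 0)
            - (condDistrib Y X P (X ω) (Ici t)).toReal) ^ 2) := by
        filter_upwards [hcd] with ω hω
        rw [← hω]
      calc ∫ ω, condVariance P (MeasurableSpace.comap X inferInstance)
            (fun ω' => if t ≤ Y ω' then (1:ℝ) else 0) ω ∂P
          = ∫ ω, ((if t ≤ Y ω then (1:ℝ) else 0) -
            (P[(fun ω' => if t ≤ Y ω' then (1:ℝ) else 0)|MeasurableSpace.comap X inferInstance]) ω)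
              ^ 2 ∂P := by
            rw [condVariance]
            exact integral_condExp hm
        _ = _ := integral_congr_ae hsq_congr
    -- J is measurable, bounded, with zero integral
    have hJ_sm : StronglyMeasurable (fun t => ∫ ω, ((if t ≤ Y ω then (1:ℝ) else 0)
        - (condDistrib Y X P (X ω) (Ici t)).toReal) ^ 2 ∂P) :=
      hdiff_meas.stronglyMeasurable.integral_prod_right'
    have hJ_nonneg : ∀ t : ℝ, 0 ≤ ∫ ω, ((if t ≤ Y ω then (1:ℝ) else 0)
        - (condDistrib Y X P (X ω) (Ici t)).toReal) ^ 2 ∂P :=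
      fun t => integral_nonneg (fun ω => sq_nonneg _)
    have hJ_int : Integrable (fun t => ∫ ω, ((if t ≤ Y ω then (1:ℝ) else 0)
        - (condDistrib Y X P (X ω) (Ici t)).toReal) ^ 2 ∂P) (Measure.map Y P) := by
      refine Integrable.mono' (integrable_const 1) hJ_sm.aestronglyMeasurable ?_
      refine ae_of_all _ fun t => ?_
      rw [Real.norm_eq_abs, abs_of_nonneg (hJ_nonneg t)]
      calc ∫ ω, ((if t ≤ Y ω then (1:ℝ) else 0)
            - (condDistrib Y X P (X ω) (Ici t)).toReal) ^ 2 ∂P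
          ≤ ∫ _ω, (1:ℝ) ∂P := integral_mono (hint2 t) (integrable_const 1) (hbound t)
        _ = 1 := by simp
    have hJ0 : ∫ t, (∫ ω, ((if t ≤ Y ω then (1:ℝ) else 0)
        - (condDistrib Y X P (X ω) (Ici t)).toReal) ^ 2 ∂P) ∂(Measure.map Y P) = 0 :=
      calc (∫ t, (∫ ω, ((if t ≤ Y ω then (1:ℝ) else 0)
            - (condDistrib Y X P (X ω) (Ici t)).toReal) ^ 2 ∂P) ∂(Measure.map Y P))
          = ∫ t, ∫ ω, condVariance P (MeasurableSpace.comap X inferInstance)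
              (fun ω' => if t ≤ Y ω' then (1:ℝ) else 0) ω ∂P ∂(Measure.map Y P) :=
            integral_congr_ae (ae_of_all _ fun t => (hIJ t).symm)
        _ = 0 := hzero
    have hJae : ∀ᵐ t ∂(Measure.map Y P), (∫ ω, ((if t ≤ Y ω then (1:ℝ) else 0)
        - (condDistrib Y X P (X ω) (Ici t)).toReal) ^ 2 ∂P) = 0 :=
      (integral_eq_zero_iff_of_nonneg hJ_nonneg hJ_int).1 hJ0
    have hae_t : ∀ᵐ t ∂(Measure.map Y P), ∀ᵐ ω ∂P,
        (if t ≤ Y ω then (1:ℝ) else 0) = (condDistrib Y X P (X ω) (Ici t)).toReal := by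
      filter_upwards [hJae] with t ht
      have hz := (integral_eq_zero_iff_of_nonneg (fun ω => sq_nonneg _) (hint2 t)).1 ht
      filter_upwards [hz] with ω hω
      have : ((if t ≤ Y ω then (1:ℝ) else 0)
          - (condDistrib Y X P (X ω) (Ici t)).toReal) ^ 2 = 0 := hω
      have := sq_eq_zero_iff.1 this
      linarith [this]
    -- swap the order of the a.e. quantifiers via Fubini
    have hD'meas : MeasurableSet {q : Ω × ℝ |
        (if q.2 ≤ Y q.1 then (1:ℝ) else 0) ≠ (condDistrib Y X P (X q.1) (Ici q.2)).toReal} := by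
      have h1 : Measurable (fun q : Ω × ℝ => if q.2 ≤ Y q.1 then (1:ℝ) else 0) :=
        hF1.comp measurable_swap
      have h2 : Measurable (fun q : Ω × ℝ => (condDistrib Y X P (X q.1) (Ici q.2)).toReal) :=
        hF2.comp measurable_swap
      exact (measurableSet_eq_fun h1 h2).compl
    have hD'null : (P.prod (Measure.map Y P)) {q : Ω × ℝ |
        (if q.2 ≤ Y q.1 then (1:ℝ) else 0) ≠ (condDistrib Y X P (X q.1) (Ici q.2)).toReal} = 0 := by
      rw [← Measure.prod_swap, Measure.map_apply measurable_swap hD'meas]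
      have hpre : (Prod.swap ⁻¹' {q : Ω × ℝ |
          (if q.2 ≤ Y q.1 then (1:ℝ) else 0) ≠ (condDistrib Y X P (X q.1) (Ici q.2)).toReal})
          = {q : ℝ × Ω |
          (if q.1 ≤ Y q.2 then (1:ℝ) else 0) ≠ (condDistrib Y X P (X q.2) (Ici q.1)).toReal} := rfl
      have hD2meas : MeasurableSet {q : ℝ × Ω |
          (if q.1 ≤ Y q.2 then (1:ℝ) else 0) ≠ (condDistrib Y X P (X q.2) (Ici q.1)).toReal} :=
        (measurableSet_eq_fun hF1 hF2).compl
      rw [hpre, Measure.measure_prod_null hD2meas]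
      filter_upwards [hae_t] with t ht
      exact ae_iff.1 ht
    have hae_ω : ∀ᵐ ω ∂P, ∀ᵐ t ∂(Measure.map Y P),
        (if t ≤ Y ω then (1:ℝ) else 0) = (condDistrib Y X P (X ω) (Ici t)).toReal := by
      have := (Measure.measure_prod_null hD'meas).1 hD'null
      filter_upwards [this] with ω hω
      exact ae_iff.2 hω
    -- the conditional CDF composed with X recovers the CDF of Y
    have hh₀_meas : Measurable (fun x : Fin p → ℝ =>
        ∫ t, (condDistrib Y X P x (Ici t)).toReal ∂(Measure.map Y P)) := by
      have hsm : StronglyMeasurable (fun q : (Fin p → ℝ) × ℝ =>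
          (condDistrib Y X P q.1 (Ici q.2)).toReal) :=
        (hGf_meas.comp measurable_swap).stronglyMeasurable
      exact hsm.integral_prod_right'.measurable
    have hcdf : ∀ᵐ ω ∂P, (∫ t, (condDistrib Y X P (X ω) (Ici t)).toReal ∂(Measure.map Y P))
        = ((Measure.map Y P) (Iic (Y ω))).toReal := by
      filter_upwards [hae_ω] with ω hω
      have h1 : (∫ t, (condDistrib Y X P (X ω) (Ici t)).toReal ∂(Measure.map Y P))
          = ∫ t, (if t ≤ Y ω then (1:ℝ) else 0) ∂(Measure.map Y P) := by
        refine integral_congr_ae ?_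
        filter_upwards [hω] with t ht
        exact ht.symm
      have h2 : (fun t => if t ≤ Y ω then (1:ℝ) else 0)
          = (Iic (Y ω)).indicator (fun _ => (1:ℝ)) := by
        ext t
        by_cases hc : t ≤ Y ω <;> simp [Set.indicator_apply, Set.mem_Iic, hc]
      rw [h1, h2, integral_indicator_const (1:ℝ) measurableSet_Iic]
      simp [measureReal_def]
    -- construct h via the generalized inverse of the CDF
    have hρ_mono : Monotone (fun u : ℝ => sInf ((fun z : ℝ => (z : EReal)) ''
        {z | u ≤ ((Measure.map Y P) (Iic z)).toReal})) := by
      intro u v huv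
      exact sInf_le_sInf (Set.image_mono (fun z hz => le_trans huv hz))
    refine ⟨fun x => (sInf ((fun z : ℝ => (z : EReal)) ''
        {z | (∫ t, (condDistrib Y X P x (Ici t)).toReal ∂(Measure.map Y P))
          ≤ ((Measure.map Y P) (Iic z)).toReal})).toReal,
      measurable_ereal_toReal.comp (hρ_mono.measurable.comp hh₀_meas), ?_⟩
    have hleast : ∀ᵐ ω ∂P, IsLeast
        {z | ((Measure.map Y P) (Iic (Y ω))).toReal ≤ ((Measure.map Y P) (Iic z)).toReal}
        (Y ω) :=
      ae_of_ae_map hY.aemeasurable (aux_isLeast (Measure.map Y P))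
    filter_upwards [hcdf, hleast] with ω h1 h2
    have himg : IsLeast ((fun z : ℝ => (z : EReal)) ''
        {z | ((Measure.map Y P) (Iic (Y ω))).toReal ≤ ((Measure.map Y P) (Iic z)).toReal})
        ((Y ω : ℝ) : EReal) := by
      constructor
      · exact mem_image_of_mem _ h2.1
      · rintro b ⟨z, hz, rfl⟩
        show ((Y ω : ℝ) : EReal) ≤ ((z : ℝ) : EReal)
        exact_mod_cast h2.2 hz
    rw [h1, himg.csInf_eq]
    simp
  · rintro ⟨h, hh, hYh⟩
    have hinner : ∀ t : ℝ, ∫ ω, condVariance P (MeasurableSpace.comap X inferInstance)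
        (fun ω' => if t ≤ Y ω' then (1:ℝ) else 0) ω ∂P = 0 := by
      intro t
      have hfg : (fun ω' => if t ≤ Y ω' then (1:ℝ) else 0) =ᵐ[P]
          (fun ω' => if t ≤ h (X ω') then (1:ℝ) else 0) := by
        filter_upwards [hYh] with ω hω
        simp only [hω]
      have hs : MeasurableSet[MeasurableSpace.comap X inferInstance] (X ⁻¹' (h ⁻¹' Ici t)) :=
        ⟨h ⁻¹' Ici t, hh measurableSet_Ici, rfl⟩
      have hg_sm : StronglyMeasurable[MeasurableSpace.comap X inferInstance]
          (fun ω' => if t ≤ h (X ω') then (1:ℝ) else 0) := by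
        have heq : (fun ω' => if t ≤ h (X ω') then (1:ℝ) else 0)
            = (X ⁻¹' (h ⁻¹' Ici t)).indicator (fun _ => (1:ℝ)) := by
          ext ω
          by_cases hc : t ≤ h (X ω) <;>
            simp [Set.indicator_apply, Set.mem_preimage, Set.mem_Ici, hc]
        rw [heq]
        exact stronglyMeasurable_const.indicator hs
      have hg_int : Integrable (fun ω' => if t ≤ h (X ω') then (1:ℝ) else 0) P :=
        (hf_int t).congr hfg
      have hce : P[(fun ω' => if t ≤ Y ω' then (1:ℝ) else 0)|MeasurableSpace.comap X inferInstance]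
          =ᵐ[P] (fun ω' => if t ≤ Y ω' then (1:ℝ) else 0) := by
        refine ((condExp_congr_ae hfg).trans ?_).trans hfg.symm
        rw [condExp_of_stronglyMeasurable hm hg_sm hg_int]
      have hsq : (fun ω => ((if t ≤ Y ω then (1:ℝ) else 0) -
          (P[(fun ω' => if t ≤ Y ω' then (1:ℝ) else 0)|MeasurableSpace.comap X inferInstance]) ω)
            ^ 2) =ᵐ[P] (0 : Ω → ℝ) := by
        filter_upwards [hce] with ω hω
        simp [hω]
      have hcv : condVariance P (MeasurableSpace.comap X inferInstance)
          (fun ω' => if t ≤ Y ω' then (1:ℝ) else 0) =ᵐ[P] 0 := by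
        refine (condExp_congr_ae hsq).trans ?_
        rw [condExp_zero]
      rw [integral_congr_ae hcv]
      simp
    calc (∫ t, ∫ ω, condVariance P (MeasurableSpace.comap X inferInstance)
            (fun ω' => if t ≤ Y ω' then (1:ℝ) else 0) ω ∂P ∂(Measure.map Y P))
        = ∫ t, (0:ℝ) ∂(Measure.map Y P) :=
          integral_congr_ae (ae_of_all _ fun t => hinner t)
      _ = 0 := integral_zero _ _
end

section
/- Let 𝒳 and 𝒴 be standard Borel spaces, let φ : 𝒳 → ℝ and ψ : 𝒴 → ℝ be measurable injections with measurable images and measurable inverses (Borel isomorphisms onto Borel subsets of ℝ), and let (X,Y) be an 𝒳 × 𝒴-valued pair of random variables with Y not almost surely a constant. Set X' := φ(X) and Y' := ψ(Y). Then: (i) ξ(X',Y') ∈ [0,1]; (ii) ξ(X',Y') = 0 if and only if X and Y are independent; (iii) ξ(X',Y') = 1 if and only if there exists a measurable function f : 𝒳 → 𝒴 such that Y = f(X) almost surely. -/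
open MeasureTheory ProbabilityTheory Filter Set
open scoped NNReal Topology ENNReal

set_option linter.unusedSectionVars false
set_option maxHeartbeats 1000000


/-- The population coefficient
`ξ(X,Y) = (∫ Var(E[1_{Y≥t} | σ(X)]) dμ(t)) / (∫ Var(1_{Y≥t}) dμ(t))`, `μ = law of Y`. -/
noncomputable def xiCoef {Ω : Type*} [MeasurableSpace Ω] {E : Type*} [MeasurableSpace E]
    (P : Measure Ω) (X : Ω → E) (Y : Ω → ℝ) : ℝ :=
  (∫ t, variance (P[(fun ω => if t ≤ Y ω then (1 : ℝ) else 0) |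
      MeasurableSpace.comap X inferInstance]) P ∂(Measure.map Y P)) /
  (∫ t, variance (fun ω => if t ≤ Y ω then (1 : ℝ) else 0) P ∂(Measure.map Y P))

section RayHelpers

lemma Ioi_eq_iUnion_Ici {b : ℝ} {u : ℕ → ℝ} (hgt : ∀ n, b < u n)
    (hlim : Tendsto u atTop (𝓝 b)) : Ioi b = ⋃ n, Ici (u n) := by
  ext y
  simp only [mem_Ioi, mem_iUnion, mem_Ici]
  constructor
  · intro hy
    rcases ((tendsto_order.1 hlim).2 y hy).exists with ⟨n, hn⟩
    exact ⟨n, hn.le⟩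
  · rintro ⟨n, hn⟩; exact (hgt n).trans_le hn

lemma measure_Ioi_eq_iSup (ρ : Measure ℝ) {b : ℝ} {u : ℕ → ℝ} (hu : Antitone u)
    (hgt : ∀ n, b < u n) (hlim : Tendsto u atTop (𝓝 b)) :
    ρ (Ioi b) = ⨆ n, ρ (Ici (u n)) := by
  rw [Ioi_eq_iUnion_Ici hgt hlim]
  exact (Monotone.directed_le fun n m hnm => Ici_subset_Ici.2 (hu hnm)).measure_iUnion

lemma meas_eq_of_between {ρ : Measure ℝ} {A B N : Set ℝ} (hBA : B ⊆ A) (hAB : A ⊆ B ∪ N)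
    (hN : ρ N = 0) : ρ A = ρ B :=
  le_antisymm ((measure_mono hAB).trans ((measure_union_le _ _).trans (by simp [hN])))
    (measure_mono hBA)

/-- Rigidity: two measures dominated by `μ` that agree on `μ`-a.e. ray agree on every ray. -/
lemma ray_eq_of_ae_ray_eq {μ α β : Measure ℝ} [IsProbabilityMeasure μ]
    (hα : ∀ s : Set ℝ, μ s = 0 → α s = 0) (hβ : ∀ s : Set ℝ, μ s = 0 → β s = 0)
    (hae : ∀ᵐ t ∂μ, α (Ici t) = β (Ici t)) :
    ∀ t, α (Ici t) = β (Ici t) := by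
  set T := {t : ℝ | α (Ici t) = β (Ici t)} with hTdef
  have hTc : μ Tᶜ = 0 := hae
  have claimA : ∀ b : ℝ, α (Ioi b) = β (Ioi b) := by
    intro b
    by_cases hS : (T ∩ Ioi b).Nonempty
    · have hbdd : BddBelow (T ∩ Ioi b) := ⟨b, fun x hx => hx.2.le⟩
      set v := sInf (T ∩ Ioi b) with hv
      have hbv : b ≤ v := le_csInf hS fun x hx => hx.2.le
      by_cases hvS : v ∈ T ∩ Ioi b
      · -- gap (b, v) is μ-null
        have hgap : μ (Ioo b v) = 0 := by
          refine measure_mono_null ?_ hTc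
          intro y hy hyT
          exact absurd (csInf_le hbdd ⟨hyT, hy.1⟩) (not_le.2 hy.2)
        have key : ∀ ρ : Measure ℝ, (∀ s : Set ℝ, μ s = 0 → ρ s = 0) →
            ρ (Ioi b) = ρ (Ici v) := by
          intro ρ hρ
          refine meas_eq_of_between (fun x hx => show b < x from hvS.2.trans_le hx) (fun x hx => ?_) (hρ _ hgap)
          rcases lt_or_ge x v with h | h
          · exact Or.inr ⟨hx, h⟩
          · exact Or.inl h
        rw [key α hα, key β hβ, hvS.1]
      · obtain ⟨u, hu_anti, hu_lim, hu_mem⟩ := exists_seq_tendsto_sInf hS hbdd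
        have hu_gt : ∀ n, v < u n := fun n =>
          lt_of_le_of_ne (csInf_le hbdd (hu_mem n)) fun h => hvS (h ▸ hu_mem n)
        have hIoiv : α (Ioi v) = β (Ioi v) := by
          rw [measure_Ioi_eq_iSup α hu_anti hu_gt hu_lim,
            measure_Ioi_eq_iSup β hu_anti hu_gt hu_lim]
          exact iSup_congr fun n => (hu_mem n).1
        rcases eq_or_lt_of_le hbv with h | hlt
        · rw [← h] at hIoiv; exact hIoiv
        · have hgap : μ (Ioc b v) = 0 := by
            refine measure_mono_null ?_ hTc
            intro y hy hyT
            have hyS : y ∈ T ∩ Ioi b := ⟨hyT, hy.1⟩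
            have : v ≤ y := csInf_le hbdd hyS
            have : y = v := le_antisymm hy.2 this
            exact hvS (this ▸ hyS)
          have key : ∀ ρ : Measure ℝ, (∀ s : Set ℝ, μ s = 0 → ρ s = 0) →
              ρ (Ioi b) = ρ (Ioi v) := by
            intro ρ hρ
            refine meas_eq_of_between (fun x hx => show b < x from hlt.trans hx) (fun x hx => ?_) (hρ _ hgap)
            rcases le_or_gt x v with h | h
            · exact Or.inr ⟨hx, h⟩
            · exact Or.inl h
          rw [key α hα, key β hβ, hIoiv]
    · have h0 : μ (Ioi b) = 0 := by
        refine measure_mono_null (fun y hy hyT => hS ⟨y, hyT, hy⟩) hTc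
      rw [hα _ h0, hβ _ h0]
  intro t
  by_cases htT : t ∈ T
  · exact htT
  · have hsing : μ {t} = 0 := by
      refine measure_mono_null ?_ hTc
      intro y hy
      simp only [mem_singleton_iff] at hy
      simpa [hy] using htT
    have key : ∀ ρ : Measure ℝ, (∀ s : Set ℝ, μ s = 0 → ρ s = 0) →
        ρ (Ici t) = ρ (Ioi t) := by
      intro ρ hρ
      refine meas_eq_of_between (fun x hx => show t ≤ x from le_of_lt hx) (fun x hx => ?_) (hρ _ hsing)
      rcases eq_or_lt_of_le (mem_Ici.1 hx) with h | h
      · exact Or.inr h.symm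
      · exact Or.inl h
    rw [key α hα, key β hβ, claimA t]

end RayHelpers

/-- If the upper CDF only takes values 0 and 1 a.e., the measure is a point mass. -/
lemma exists_compl_singleton_null_of_cdf01 {μ : Measure ℝ} [IsProbabilityMeasure μ]
    (h : ∀ᵐ t ∂μ, μ (Ici t) = 0 ∨ μ (Ici t) = 1) : ∃ c : ℝ, μ {c}ᶜ = 0 := by
  set U := {y : ℝ | μ (Ici y) = 0} with hU
  set V := {y : ℝ | μ (Ici y) = 1} with hV
  have hUV : μ (U ∪ V)ᶜ = 0 := by
    refine measure_mono_null ?_ h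
    intro y hy
    simpa [U, V, not_or] using hy
  have hUnull : μ U = 0 := by
    by_cases hne : U.Nonempty
    · by_cases hbdd : BddBelow U
      · by_cases hinf : sInf U ∈ U
        · refine measure_mono_null (fun y hy => csInf_le hbdd hy) hinf
        · obtain ⟨u, _, hu_lim, hu_mem⟩ := exists_seq_tendsto_sInf hne hbdd
          have hsub : U ⊆ ⋃ n, Ici (u n) := by
            intro y hy
            have hlt : sInf U < y :=
              lt_of_le_of_ne (csInf_le hbdd hy) fun hc => hinf (hc ▸ hy)
            rcases ((tendsto_order.1 hu_lim).2 y hlt).exists with ⟨n, hn⟩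
            exact mem_iUnion.2 ⟨n, hn.le⟩
          exact measure_mono_null hsub (measure_iUnion_null fun n => hu_mem n)
      · exfalso
        have hall : ∀ b : ℝ, μ (Ici b) = 0 := by
          intro b
          obtain ⟨y, hyU, hyb⟩ := not_bddBelow_iff.1 hbdd b
          exact measure_mono_null (Ici_subset_Ici.2 hyb.le) hyU
        have : μ univ = 0 := by
          have : (univ : Set ℝ) ⊆ ⋃ n : ℕ, Ici (-(n : ℝ)) := by
            intro y _
            obtain ⟨n, hn⟩ := exists_nat_gt (-y)
            exact mem_iUnion.2 ⟨n, by simp [mem_Ici]; linarith⟩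
          exact measure_mono_null this (measure_iUnion_null fun n => hall _)
        simp [measure_univ] at this
    · rw [not_nonempty_iff_eq_empty.1 hne]; simp
  have hVc : μ Vᶜ = 0 := by
    have hsub : Vᶜ ⊆ (U ∪ V)ᶜ ∪ U := by
      intro y hy
      by_cases hyU : y ∈ U
      · exact Or.inr hyU
      · exact Or.inl fun hc => hc.elim hyU hy
    refine le_antisymm ((measure_mono hsub).trans ((measure_union_le _ _).trans ?_)) zero_le
    rw [hUV, hUnull, add_zero]
  have hVne : V.Nonempty := by
    by_contra hc
    rw [not_nonempty_iff_eq_empty] at hc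
    rw [hc, compl_empty] at hVc
    simp [measure_univ] at hVc
  have hVIio : ∀ y ∈ V, μ (Iio y) = 0 := by
    intro y hy
    have := measure_compl measurableSet_Ici (measure_ne_top μ (Ici y))
    rw [compl_Ici] at this
    rw [this, measure_univ, hy]
    simp
  have hVbdd : BddAbove V := by
    by_contra hbdd
    have hch : ∀ n : ℕ, ∃ y, y ∈ V ∧ (n : ℝ) < y := by
      intro n
      obtain ⟨y, hyV, hy⟩ := not_bddAbove_iff.1 hbdd n
      exact ⟨y, hyV, hy⟩
    choose w hwV hwgt using hch
    have : μ univ = 0 := by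
      have hsub : (univ : Set ℝ) ⊆ ⋃ n : ℕ, Iio (w n) := by
        intro y _
        obtain ⟨n, hn⟩ := exists_nat_gt y
        exact mem_iUnion.2 ⟨n, hn.trans (hwgt n)⟩
      exact measure_mono_null hsub (measure_iUnion_null fun n => hVIio _ (hwV n))
    simp [measure_univ] at this
  refine ⟨sSup V, ?_⟩
  have hIoi : μ (Ioi (sSup V)) = 0 := by
    refine measure_mono_null (fun y hy => ?_) hVc
    exact fun hyV => absurd (le_csSup hVbdd hyV) (not_le.2 hy)
  have hIio : μ (Iio (sSup V)) = 0 := by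
    obtain ⟨u, _, hu_lim, hu_mem⟩ := exists_seq_tendsto_sSup hVne hVbdd
    have hsub : Iio (sSup V) ⊆ ⋃ n, Iio (u n) := by
      intro y hy
      rcases ((tendsto_order.1 hu_lim).1 y hy).exists with ⟨n, hn⟩
      exact mem_iUnion.2 ⟨n, hn⟩
    exact measure_mono_null hsub (measure_iUnion_null fun n => hVIio _ (hu_mem n))
  have : ({sSup V}ᶜ : Set ℝ) ⊆ Iio (sSup V) ∪ Ioi (sSup V) := by
    intro y hy
    rcases lt_trichotomy y (sSup V) with h | h | h
    · exact Or.inl h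
    · exact absurd h hy
    · exact Or.inr h
  refine le_antisymm ((measure_mono this).trans ((measure_union_le _ _).trans ?_)) zero_le
  rw [hIio, hIoi, add_zero]

/-- The set of points `y` that have a `μ`-null left neighborhood `Ioc q y` is `μ`-null. -/
lemma bad_left_null (μ : Measure ℝ) [IsFiniteMeasure μ] :
    μ {y : ℝ | ∃ q : ℚ, (q : ℝ) < y ∧ μ (Ioc (q : ℝ) y) = 0} = 0 := by
  have hsub : {y : ℝ | ∃ q : ℚ, (q : ℝ) < y ∧ μ (Ioc (q : ℝ) y) = 0} ⊆
      ⋃ q : ℚ, {y : ℝ | (q : ℝ) < y ∧ μ (Ioc (q : ℝ) y) = 0} := by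
    rintro y ⟨q, hq⟩
    exact mem_iUnion.2 ⟨q, hq⟩
  refine measure_mono_null hsub (measure_iUnion_null fun q => ?_)
  set S := {y : ℝ | (q : ℝ) < y ∧ μ (Ioc (q : ℝ) y) = 0} with hSdef
  by_cases hne : S.Nonempty
  · by_cases hbdd : BddAbove S
    · by_cases hsup : sSup S ∈ S
      · refine measure_mono_null (fun y hy => ?_) hsup.2
        exact ⟨hy.1, le_csSup hbdd hy⟩
      · obtain ⟨u, _, hu_lim, hu_mem⟩ := exists_seq_tendsto_sSup hne hbdd
        have hsub2 : S ⊆ ⋃ n, Ioc ((q : ℝ)) (u n) := by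
          intro y hy
          have hlt : y < sSup S :=
            lt_of_le_of_ne (le_csSup hbdd hy) fun hc => hsup (hc ▸ hy)
          rcases ((tendsto_order.1 hu_lim).1 y hlt).exists with ⟨n, hn⟩
          exact mem_iUnion.2 ⟨n, hy.1, hn.le⟩
        exact measure_mono_null hsub2 (measure_iUnion_null fun n => (hu_mem n).2)
    · have hch : ∀ n : ℕ, ∃ y, y ∈ S ∧ (n : ℝ) < y := by
        intro n
        obtain ⟨y, hyS, hy⟩ := not_bddAbove_iff.1 hbdd n
        exact ⟨y, hyS, hy⟩
      choose w hwS hwgt using hch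
      have hsub2 : S ⊆ ⋃ n : ℕ, Ioc ((q : ℝ)) (w n) := by
        intro y hy
        obtain ⟨n, hn⟩ := exists_nat_gt y
        exact mem_iUnion.2 ⟨n, hy.1, (hn.trans (hwgt n)).le⟩
      exact measure_mono_null hsub2 (measure_iUnion_null fun n => (hwS n).2)
  · rw [not_nonempty_iff_eq_empty.1 hne]; simp


/-- Given a full-measure set `T`, there is a countable `T₀ ⊆ T` which approximates
`μ`-a.e. point from below. -/
lemma exists_countable_dense_from_below (μ : Measure ℝ) [IsProbabilityMeasure μ]
    (T : Set ℝ) (hT : μ Tᶜ = 0) :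
    ∃ T₀ : Set ℝ, T₀.Countable ∧ T₀ ⊆ T ∧
      ∀ᵐ y ∂μ, ∀ ε : ℝ, 0 < ε → ∃ s ∈ T₀, y - ε < s ∧ s ≤ y := by
  classical
  set A := {x : ℝ | 0 < μ {x}} with hA
  have hAcount : A.Countable := by
    exact Measure.countable_meas_pos_of_disjoint_iUnion
      (fun x : ℝ => measurableSet_singleton x)
      (fun x x' hxx' => by simpa [Function.onFun, disjoint_singleton] using hxx')
  have hAT : A ⊆ T := by
    intro x hx
    by_contra hxT
    have : μ {x} = 0 := measure_mono_null (by simpa using hxT) hT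
    simp [hA, this] at hx
  set pick : ℚ → ℚ → Set ℝ := fun q r =>
    if h : (T ∩ Ioc (q : ℝ) (r : ℝ)).Nonempty then {h.some} else ∅ with hpick
  have hpick_sub : ∀ q r, pick q r ⊆ T ∩ Ioc (q : ℝ) (r : ℝ) := by
    intro q r x hx
    simp only [hpick] at hx
    split_ifs at hx with h
    · rw [mem_singleton_iff] at hx
      exact hx ▸ h.some_mem
    · exact absurd hx (notMem_empty x)
  set C := ⋃ q : ℚ, ⋃ r : ℚ, pick q r with hC
  have hCcount : C.Countable := by
    refine countable_iUnion fun q => countable_iUnion fun r => ?_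
    simp only [hpick]
    split_ifs
    · exact countable_singleton _
    · exact countable_empty
  have hCT : C ⊆ T := by
    intro x hx
    simp only [hC, mem_iUnion] at hx
    obtain ⟨q, r, hqr⟩ := hx
    exact (hpick_sub q r hqr).1
  refine ⟨A ∪ C, hAcount.union hCcount, union_subset hAT hCT, ?_⟩
  rw [ae_iff]
  refine measure_mono_null ?_ (bad_left_null μ)
  intro y hy
  simp only [mem_setOf_eq, not_forall] at hy
  obtain ⟨ε, hε, hny⟩ := hy
  push_neg at hny
  obtain ⟨q₀, hq₀1, hq₀2⟩ := exists_rat_btwn (show y - ε < y by linarith)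
  refine ⟨q₀, hq₀2, ?_⟩
  by_contra hμq
  have hTne : (T ∩ Ioc (q₀ : ℝ) y).Nonempty := by
    by_contra hc
    rw [not_nonempty_iff_eq_empty] at hc
    have : Ioc (q₀ : ℝ) y ⊆ Tᶜ := by
      intro z hz hzT
      exact (notMem_empty z) (hc ▸ mem_inter hzT hz)
    exact hμq (measure_mono_null this hT)
  by_cases hlt : ∃ t ∈ T ∩ Ioc (q₀ : ℝ) y, t < y
  · obtain ⟨t, ⟨htT, ht1, _⟩, hty⟩ := hlt
    obtain ⟨r, hr1, hr2⟩ := exists_rat_btwn hty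
    have hne2 : (T ∩ Ioc (q₀ : ℝ) (r : ℝ)).Nonempty := ⟨t, htT, ht1, hr1.le⟩
    set s := hne2.some with hs
    have hsmem : s ∈ T ∩ Ioc (q₀ : ℝ) (r : ℝ)  := hne2.some_mem
    have hsC : s ∈ C := by
      simp only [hC, mem_iUnion]
      exact ⟨q₀, r, by simp only [hpick]; rw [dif_pos hne2]; exact rfl⟩
    have h1 : y - ε < s := hq₀1.trans hsmem.2.1
    have h2 : s < y := hsmem.2.2.trans_lt hr2
    exact absurd (hny s (Or.inr hsC) h1) (not_lt.2 h2.le)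
  · push_neg at hlt
    have hyT : y ∈ T := by
      obtain ⟨t, htm⟩ := hTne
      have : t = y := le_antisymm htm.2.2 (hlt t htm)
      exact this ▸ htm.1
    have hIoo : μ (Ioo (q₀ : ℝ) y) = 0 := by
      refine measure_mono_null ?_ hT
      intro z hz hzT
      exact absurd hz.2 (not_lt.2 (hlt z ⟨hzT, hz.1, hz.2.le⟩))
    have hsing : 0 < μ {y} := by
      by_contra hc
      push_neg at hc
      have h0 : μ {y} = 0 := le_antisymm hc zero_le
      have : Ioc (q₀ : ℝ) y ⊆ Ioo (q₀ : ℝ) y ∪ {y} := by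
        intro z hz
        rcases lt_or_eq_of_le hz.2 with h | h
        · exact Or.inl ⟨hz.1, h⟩
        · exact Or.inr (by simp [h])
      exact hμq (le_antisymm ((measure_mono this).trans
        ((measure_union_le _ _).trans (by rw [hIoo, h0, add_zero]))) zero_le)
    exact absurd (hny y (Or.inl hsing) (by linarith)) (lt_irrefl y)

noncomputable section Core

variable {Ω : Type*} [MeasurableSpace Ω]

/-- indicator of `{Y' ≥ t}` -/
def gInd (Y' : Ω → ℝ) (t : ℝ) : Ω → ℝ := fun ω => if t ≤ Y' ω then 1 else 0

def xiF (P : Measure Ω) [IsFiniteMeasure P] (X' Y' : Ω → ℝ) : ℝ → ℝ → ℝ :=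
  fun x t => (condDistrib Y' X' P x (Ici t)).toReal

def xiP (P : Measure Ω) (Y' : Ω → ℝ) : ℝ → ℝ := fun t => (P.map Y' (Ici t)).toReal

def xiQ (P : Measure Ω) [IsFiniteMeasure P] (X' Y' : Ω → ℝ) : ℝ → ℝ :=
  fun t => ∫ x, (xiF P X' Y' x t) ^ 2 ∂(P.map X')

variable {P : Measure Ω} [IsProbabilityMeasure P] {X' Y' : Ω → ℝ}

lemma gInd_eq_indicator (Y' : Ω → ℝ) (t : ℝ) :
    gInd Y' t = (Y' ⁻¹' Ici t).indicator (fun _ => (1 : ℝ)) := by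
  funext ω
  by_cases h : t ≤ Y' ω <;> simp [gInd, Set.indicator_apply, h, mem_Ici]

lemma gInd_sq (Y' : Ω → ℝ) (t : ℝ) : (gInd Y' t) ^ 2 = gInd Y' t := by
  funext ω
  by_cases h : t ≤ Y' ω <;> simp [gInd, h]

lemma gInd_nonneg (t : ℝ) (ω : Ω) : 0 ≤ gInd Y' t ω := by
  by_cases h : t ≤ Y' ω <;> simp [gInd, h]

lemma gInd_le_one (t : ℝ) (ω : Ω) : gInd Y' t ω ≤ 1 := by
  by_cases h : t ≤ Y' ω <;> simp [gInd, h]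

lemma measurable_gInd (hY' : Measurable Y') (t : ℝ) : Measurable (gInd Y' t) := by
  rw [gInd_eq_indicator]
  exact (measurable_const.indicator (hY' measurableSet_Ici))

lemma memℒp_gInd (hY' : Measurable Y') (t : ℝ) : MemLp (gInd Y' t) 2 P := by
  rw [gInd_eq_indicator]
  exact (memLp_const (1 : ℝ)).indicator (hY' measurableSet_Ici)

lemma integrable_gInd (hY' : Measurable Y') (t : ℝ) : Integrable (gInd Y' t) P :=
  (memℒp_gInd hY' t).integrable one_le_two

/-- helper : bounded measurable functions are in L² on a probability space -/
lemma memℒp_two_of_bound {α : Type*} [MeasurableSpace α] {μ : Measure α} [IsFiniteMeasure μ]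
    {f : α → ℝ} (hf : AEStronglyMeasurable f μ) (hb : ∀ x, |f x| ≤ 1) : MemLp f 2 μ :=
  (memLp_top_of_bound hf 1 (ae_of_all _ hb)).mono_exponent le_top

lemma integrable_of_bound {α : Type*} [MeasurableSpace α] {μ : Measure α} [IsFiniteMeasure μ]
    {f : α → ℝ} (hf : AEStronglyMeasurable f μ) (hb : ∀ x, |f x| ≤ 1) : Integrable f μ :=
  (memℒp_two_of_bound hf hb).integrable one_le_two

lemma xiF_nonneg (X' Y' : Ω → ℝ) (x t : ℝ) : 0 ≤ xiF P X' Y' x t := ENNReal.toReal_nonneg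

lemma xiF_le_one (X' Y' : Ω → ℝ) (x t : ℝ) : xiF P X' Y' x t ≤ 1 := by
  rw [xiF, ← ENNReal.toReal_one]
  exact ENNReal.toReal_mono ENNReal.one_ne_top prob_le_one

lemma xiP_nonneg (Y' : Ω → ℝ) (t : ℝ) : 0 ≤ xiP P Y' t := ENNReal.toReal_nonneg

lemma xiP_le_one (Y' : Ω → ℝ) (t : ℝ) : xiP P Y' t ≤ 1 := by
  rw [xiP, ← ENNReal.toReal_one]
  exact ENNReal.toReal_mono ENNReal.one_ne_top prob_le_one

/-- The conditional expectation of the indicator is given by the conditional kernel. -/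
lemma condexp_gInd (hX' : Measurable X') (hY' : Measurable Y') (t : ℝ) :
    P[gInd Y' t | MeasurableSpace.comap X' inferInstance] =ᵐ[P]
      fun ω => xiF P X' Y' (X' ω) t := by
  have h := condDistrib_ae_eq_condExp (μ := P) hX' hY' (measurableSet_Ici (a := t))
  rw [gInd_eq_indicator]
  exact h.symm

/-- joint measurability of `xiF` -/
lemma measurable_xiF (X' Y' : Ω → ℝ) :
    Measurable (fun z : ℝ × ℝ => xiF P X' Y' z.1 z.2) := by
  have ht : MeasurableSet {p : (ℝ × ℝ) × ℝ | p.1.2 ≤ p.2} :=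
    measurableSet_le (measurable_fst.snd) measurable_snd
  have h := Kernel.measurable_kernel_prodMk_left
    (κ := Kernel.prodMkRight ℝ (condDistrib Y' X' P)) ht
  have h2 : (fun z : ℝ × ℝ => condDistrib Y' X' P z.1 (Ici z.2)) =
      fun a : ℝ × ℝ => (Kernel.prodMkRight ℝ (condDistrib Y' X' P)) a
        (Prod.mk a ⁻¹' {p : (ℝ × ℝ) × ℝ | p.1.2 ≤ p.2}) := by
    funext a
    rw [Kernel.prodMkRight_apply]
    congr 1
  unfold xiF
  exact (h2 ▸ h : Measurable fun z : ℝ × ℝ => condDistrib Y' X' P z.1 (Ici z.2)).ennreal_toReal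

lemma measurable_xiF_fst (X' Y' : Ω → ℝ) (t : ℝ) :
    Measurable (fun x : ℝ => xiF P X' Y' x t) :=
  (measurable_xiF X' Y').comp (measurable_id.prodMk measurable_const)

lemma measurable_xiP (Y' : Ω → ℝ) : Measurable (xiP P Y') := by
  have h : Antitone (fun t => P.map Y' (Ici t)) := fun s t hst =>
    measure_mono (Ici_subset_Ici.2 hst)
  exact h.measurable.ennreal_toReal

lemma measurable_xiQ (X' Y' : Ω → ℝ) : Measurable (xiQ P X' Y') := by
  have hf : StronglyMeasurable (fun z : ℝ × ℝ => xiF P X' Y' z.2 z.1 ^ 2) :=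
    (((measurable_xiF X' Y').comp measurable_swap).pow_const 2).stronglyMeasurable
  have h := hf.integral_kernel_prod_right' (κ := Kernel.const ℝ (P.map X'))
  have h2 : xiQ P X' Y' = fun t => ∫ x, xiF P X' Y' x t ^ 2 ∂(Kernel.const ℝ (P.map X') t) := by
    funext t
    rw [Kernel.const_apply, xiQ]
  rw [h2]
  exact h.measurable

end Core

noncomputable section Core2

variable {Ω : Type*} [MeasurableSpace Ω] {P : Measure Ω} [IsProbabilityMeasure P] {X' Y' : Ω → ℝ}

lemma variance_congr_ae {f g : Ω → ℝ} (h : f =ᵐ[P] g) : variance f P = variance g P := by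
  have hint : ∫ ω, f ω ∂P = ∫ ω, g ω ∂P := integral_congr_ae h
  unfold ProbabilityTheory.variance ProbabilityTheory.evariance
  congr 1
  refine lintegral_congr_ae (h.mono fun ω hω => ?_)
  dsimp only
  rw [hω, hint]

lemma integral_gInd (hY' : Measurable Y') (t : ℝ) : ∫ ω, gInd Y' t ω ∂P = xiP P Y' t := by
  rw [gInd_eq_indicator, integral_indicator_const (1 : ℝ) (hY' measurableSet_Ici), xiP,
    Measure.map_apply hY' measurableSet_Ici]
  simp [measureReal_def]

lemma integral_xiF (hX' : Measurable X') (hY' : Measurable Y') (t : ℝ) :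
    ∫ x, xiF P X' Y' x t ∂(P.map X') = xiP P Y' t := by
  have h1 : ∫ x, xiF P X' Y' x t ∂(P.map X') = ∫ ω, xiF P X' Y' (X' ω) t ∂P :=
    integral_map hX'.aemeasurable ((measurable_xiF_fst X' Y' t).aestronglyMeasurable)
  rw [h1, ← integral_congr_ae (condexp_gInd hX' hY' t),
    integral_condExp hX'.comap_le, integral_gInd hY' t]

lemma memℒp_xiF_fst (X' Y' : Ω → ℝ) (t : ℝ) :
    MemLp (fun x => xiF P X' Y' x t) 2 (P.map X') :=
  memℒp_two_of_bound (measurable_xiF_fst X' Y' t).aestronglyMeasurable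
    (fun x => abs_le.2 ⟨by linarith [xiF_nonneg (P := P) X' Y' x t], xiF_le_one X' Y' x t⟩)

lemma sq_xiP_le_xiQ (hX' : Measurable X') (hY' : Measurable Y') (t : ℝ) :
    xiP P Y' t ^ 2 ≤ xiQ P X' Y' t := by
  haveI : IsProbabilityMeasure (P.map X') := Measure.isProbabilityMeasure_map hX'.aemeasurable
  have h := variance_nonneg (fun x => xiF P X' Y' x t) (P.map X')
  rw [variance_eq_sub (memℒp_xiF_fst X' Y' t)] at h
  simp only [Pi.pow_apply] at h
  rw [integral_xiF hX' hY' t] at h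
  have : xiQ P X' Y' t = ∫ x, xiF P X' Y' x t ^ 2 ∂(P.map X') := rfl
  linarith

lemma xiQ_nonneg (X' Y' : Ω → ℝ) (t : ℝ) : 0 ≤ xiQ P X' Y' t :=
  integral_nonneg fun x => sq_nonneg _

lemma xiQ_le_xiP (hX' : Measurable X') (hY' : Measurable Y') (t : ℝ) :
    xiQ P X' Y' t ≤ xiP P Y' t := by
  haveI : IsProbabilityMeasure (P.map X') := Measure.isProbabilityMeasure_map hX'.aemeasurable
  have hb : ∀ x, xiF P X' Y' x t ^ 2 ≤ xiF P X' Y' x t := fun x =>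
    pow_le_of_le_one (xiF_nonneg X' Y' x t) (xiF_le_one X' Y' x t) two_ne_zero
  have h : xiQ P X' Y' t ≤ ∫ x, xiF P X' Y' x t ∂(P.map X') := by
    refine integral_mono ?_ ?_ hb
    · exact integrable_of_bound ((measurable_xiF_fst X' Y' t).pow_const 2).aestronglyMeasurable
        (fun x => abs_le.2 ⟨by nlinarith [sq_nonneg (xiF P X' Y' x t)],
          pow_le_one₀ (xiF_nonneg X' Y' x t) (xiF_le_one X' Y' x t)⟩)
    · exact integrable_of_bound (measurable_xiF_fst X' Y' t).aestronglyMeasurable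
        (fun x => abs_le.2 ⟨by linarith [xiF_nonneg (P := P) X' Y' x t], xiF_le_one X' Y' x t⟩)
  rw [integral_xiF hX' hY' t] at h
  exact h

lemma variance_condexp_eq (hX' : Measurable X') (hY' : Measurable Y') (t : ℝ) :
    variance (P[gInd Y' t | MeasurableSpace.comap X' inferInstance]) P
      = xiQ P X' Y' t - xiP P Y' t ^ 2 := by
  rw [variance_congr_ae (condexp_gInd hX' hY' t)]
  have hmem : MemLp (fun ω => xiF P X' Y' (X' ω) t) 2 P :=
    memℒp_two_of_bound ((measurable_xiF_fst X' Y' t).comp hX').aestronglyMeasurable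
      (fun ω => abs_le.2 ⟨by linarith [xiF_nonneg (P := P) X' Y' (X' ω) t],
        xiF_le_one X' Y' (X' ω) t⟩)
  rw [variance_eq_sub hmem]
  simp only [Pi.pow_apply]
  have h1 : ∫ ω, xiF P X' Y' (X' ω) t ^ 2 ∂P = xiQ P X' Y' t := by
    rw [xiQ]
    exact (integral_map hX'.aemeasurable
      (((measurable_xiF_fst X' Y' t).pow_const 2).aestronglyMeasurable)).symm
  have h2 : ∫ ω, xiF P X' Y' (X' ω) t ∂P = xiP P Y' t := by
    rw [← integral_xiF hX' hY' t]
    exact (integral_map hX'.aemeasurable (measurable_xiF_fst X' Y' t).aestronglyMeasurable).symm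
  rw [h1, h2]

lemma variance_gInd_eq (hY' : Measurable Y') (t : ℝ) :
    variance (gInd Y' t) P = xiP P Y' t - xiP P Y' t ^ 2 := by
  rw [variance_eq_sub (memℒp_gInd hY' t)]
  have h1 : ∫ ω, ((gInd Y' t) ^ 2) ω ∂P = xiP P Y' t := by
    rw [gInd_sq]; exact integral_gInd hY' t
  simp only [Pi.pow_apply] at h1 ⊢
  rw [h1, integral_gInd hY' t]

lemma integrable_denom_integrand (hY' : Measurable Y') :
    Integrable (fun t => xiP P Y' t - xiP P Y' t ^ 2) (P.map Y') := by
  haveI : IsProbabilityMeasure (P.map Y') := Measure.isProbabilityMeasure_map hY'.aemeasurable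
  refine integrable_of_bound ((measurable_xiP Y').sub ((measurable_xiP Y').pow_const 2)).aestronglyMeasurable
    (fun t => abs_le.2 ⟨?_, ?_⟩)
  · nlinarith [xiP_nonneg (P := P) Y' t, xiP_le_one (P := P) Y' t]
  · nlinarith [xiP_nonneg (P := P) Y' t, xiP_le_one (P := P) Y' t]

lemma integrable_num_integrand (hX' : Measurable X') (hY' : Measurable Y') :
    Integrable (fun t => xiQ P X' Y' t - xiP P Y' t ^ 2) (P.map Y') := by
  haveI : IsProbabilityMeasure (P.map Y') := Measure.isProbabilityMeasure_map hY'.aemeasurable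
  haveI : IsProbabilityMeasure (P.map X') := Measure.isProbabilityMeasure_map hX'.aemeasurable
  have hq1 : ∀ t, xiQ P X' Y' t ≤ 1 := fun t =>
    (xiQ_le_xiP hX' hY' t).trans (xiP_le_one Y' t)
  refine integrable_of_bound ((measurable_xiQ X' Y').sub ((measurable_xiP Y').pow_const 2)).aestronglyMeasurable
    (fun t => abs_le.2 ⟨?_, ?_⟩)
  · nlinarith [xiQ_nonneg (P := P) X' Y' t, xiP_nonneg (P := P) Y' t, xiP_le_one (P := P) Y' t]
  · nlinarith [hq1 t, xiP_nonneg (P := P) Y' t, xiP_le_one (P := P) Y' t, sq_nonneg (xiP P Y' t)]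

lemma xiCoef_eq (hX' : Measurable X') (hY' : Measurable Y') :
    xiCoef P X' Y' =
      (∫ t, (xiQ P X' Y' t - xiP P Y' t ^ 2) ∂(P.map Y')) /
      (∫ t, (xiP P Y' t - xiP P Y' t ^ 2) ∂(P.map Y')) := by
  rw [xiCoef]
  congr 1
  · exact integral_congr_ae (ae_of_all _ fun t => variance_condexp_eq hX' hY' t)
  · exact integral_congr_ae (ae_of_all _ fun t => variance_gInd_eq hY' t)

lemma denom_pos (hY' : Measurable Y') (hnc : ¬ ∃ c : ℝ, ∀ᵐ ω ∂P, Y' ω = c) :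
    0 < ∫ t, (xiP P Y' t - xiP P Y' t ^ 2) ∂(P.map Y') := by
  haveI : IsProbabilityMeasure (P.map Y') := Measure.isProbabilityMeasure_map hY'.aemeasurable
  have hnn : ∀ t, 0 ≤ xiP P Y' t - xiP P Y' t ^ 2 := fun t => by
    nlinarith [xiP_nonneg (P := P) Y' t, xiP_le_one (P := P) Y' t]
  rcases (integral_nonneg (f := fun t => xiP P Y' t - xiP P Y' t ^ 2) hnn).lt_or_eq with h | h
  · exact h
  exfalso
  have hae : ∀ᵐ t ∂(P.map Y'), xiP P Y' t - xiP P Y' t ^ 2 = 0 := by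
    have := (integral_eq_zero_iff_of_nonneg hnn (integrable_denom_integrand hY')).1 h.symm
    filter_upwards [this] with t ht
    simpa using ht
  have hcdf : ∀ᵐ t ∂(P.map Y'), P.map Y' (Ici t) = 0 ∨ P.map Y' (Ici t) = 1 := by
    filter_upwards [hae] with t ht
    have hp : xiP P Y' t = 0 ∨ xiP P Y' t = 1 := by
      rcases mul_eq_zero.1 (by nlinarith [ht] : xiP P Y' t * (1 - xiP P Y' t) = 0) with h' | h'
      · exact Or.inl h'
      · exact Or.inr (by linarith)
    rcases hp with h' | h'
    · left
      have := ENNReal.toReal_eq_zero_iff (P.map Y' (Ici t))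
      rcases (this.1 h') with h'' | h''
      · exact h''
      · exact absurd h'' (measure_ne_top _ _)
    · right
      rw [xiP] at h'
      exact (ENNReal.toReal_eq_one_iff _).1 h'
  obtain ⟨c, hc⟩ := exists_compl_singleton_null_of_cdf01 hcdf
  refine hnc ⟨c, ?_⟩
  have : P.map Y' {c}ᶜ = 0 := hc
  rw [Measure.map_apply hY' (measurableSet_singleton c).compl] at this
  rw [ae_iff]
  convert this using 2
  rfl

end Core2

noncomputable section Core3

variable {Ω : Type*} [MeasurableSpace Ω] {P : Measure Ω} [IsProbabilityMeasure P] {X' Y' : Ω → ℝ}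

lemma variance_const' (c : ℝ) : variance (fun _ : Ω => c) P = 0 := by
  rw [variance_eq_sub (memLp_const c)]
  simp

/-- From a.e. degenerate conditional variance, independence. -/
lemma indep_of_ae_eq (hX' : Measurable X') (hY' : Measurable Y')
    (h : ∀ᵐ t ∂(P.map Y'), xiQ P X' Y' t = xiP P Y' t ^ 2) :
    IndepFun X' Y' P := by
  haveI : IsProbabilityMeasure (P.map Y') := Measure.isProbabilityMeasure_map hY'.aemeasurable
  haveI : IsProbabilityMeasure (P.map X') := Measure.isProbabilityMeasure_map hX'.aemeasurable
  -- Step 1: for a.e. t, the kernel CDF is a.e. constant.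
  have hconst : ∀ᵐ t ∂(P.map Y'),
      (fun x => xiF P X' Y' x t) =ᵐ[P.map X'] fun _ => xiP P Y' t := by
    filter_upwards [h] with t ht
    have hvar : variance (fun x => xiF P X' Y' x t) (P.map X') = 0 := by
      rw [variance_eq_sub (memℒp_xiF_fst X' Y' t)]
      simp only [Pi.pow_apply]
      rw [integral_xiF hX' hY' t]
      have : xiQ P X' Y' t = ∫ x, xiF P X' Y' x t ^ 2 ∂(P.map X') := rfl
      linarith
    have hev : evariance (fun x => xiF P X' Y' x t) (P.map X') = 0 := by
      have hlt := (memℒp_xiF_fst (P := P) X' Y' t).evariance_lt_top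
      rcases ENNReal.toReal_eq_zero_iff _ |>.1 hvar with h' | h'
      · exact h'
      · exact absurd h' hlt.ne
    have := (evariance_eq_zero_iff ((measurable_xiF_fst (P := P) X' Y' t)).aemeasurable).1 hev
    filter_upwards [this] with x hx
    rw [hx, integral_xiF hX' hY' t]
  -- Step 2: for a.e. t, the kernel applied to `Ici t` agrees with the marginal.
  have hker : ∀ᵐ t ∂(P.map Y'),
      ∀ᵐ x ∂(P.map X'), condDistrib Y' X' P x (Ici t) = P.map Y' (Ici t) := by
    filter_upwards [hconst] with t ht
    filter_upwards [ht] with x hx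
    have hne : condDistrib Y' X' P x (Ici t) ≠ ⊤ := measure_ne_top _ _
    have hne2 : P.map Y' (Ici t) ≠ ⊤ := measure_ne_top _ _
    exact (ENNReal.toReal_eq_toReal_iff' hne hne2).1 hx
  rw [indepFun_iff_measure_inter_preimage_eq_mul]
  intro A B hA hB
  -- the two measures
  set ν := P.map X' with hν
  set μ := P.map Y' with hμ
  set α : Measure ℝ := (P.restrict (X' ⁻¹' A)).map Y' with hα
  set β : Measure ℝ := ν A • μ with hβ
  have hαac : ∀ s : Set ℝ, μ s = 0 → α s = 0 := by
    intro s hs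
    have hle : α ≤ μ := Measure.map_mono Measure.restrict_le_self hY'
    exact (Measure.absolutelyContinuous_of_le hle) hs
  have hβac : ∀ s : Set ℝ, μ s = 0 → β s = 0 := by
    intro s hs
    simp [hβ, hs]
  have hray : ∀ᵐ t ∂μ, α (Ici t) = β (Ici t) := by
    filter_upwards [hker] with t ht
    have h1 : α (Ici t) = P (X' ⁻¹' A ∩ Y' ⁻¹' Ici t) := by
      rw [hα, Measure.map_apply hY' measurableSet_Ici,
        Measure.restrict_apply (hY' measurableSet_Ici), inter_comm]
    have h2 : ∫⁻ a in X' ⁻¹' A, condDistrib Y' X' P (X' a) (Ici t) ∂P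
        = P (X' ⁻¹' A ∩ Y' ⁻¹' Ici t) :=
      setLIntegral_preimage_condDistrib hX' hY'.aemeasurable measurableSet_Ici hA
    have h3 : ∫⁻ a in X' ⁻¹' A, condDistrib Y' X' P (X' a) (Ici t) ∂P
        = ∫⁻ x in A, condDistrib Y' X' P x (Ici t) ∂ν := by
      rw [hν, setLIntegral_map hA (Kernel.measurable_coe _ measurableSet_Ici) hX']
    have h4 : ∫⁻ x in A, condDistrib Y' X' P x (Ici t) ∂ν
        = ∫⁻ _ in A, μ (Ici t) ∂ν := by
      refine lintegral_congr_ae (ae_restrict_of_ae ?_)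
      filter_upwards [ht] with x hx
      rw [hx]
    rw [h1, ← h2, h3, h4]
    rw [setLIntegral_const]
    simp [hβ, mul_comm]
  have hext : α = β := by
    have hIci : ∀ t, α (Ici t) = β (Ici t) := ray_eq_of_ae_ray_eq hαac hβac hray
    haveI : IsFiniteMeasure α := by
      rw [hα]; infer_instance
    refine ext_of_generate_finite (range Ici) ?_ isPiSystem_Ici ?_ ?_
    · rw [BorelSpace.measurable_eq (α := ℝ), borel_eq_generateFrom_Ici]
    · rintro s ⟨t, rfl⟩
      exact hIci t
    · have hu1 : α univ = ν A := by
        rw [hα, Measure.map_apply hY' MeasurableSet.univ, preimage_univ,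
          Measure.restrict_apply_univ, hν, Measure.map_apply hX' hA]
      have hu2 : β univ = ν A := by
        simp [hβ]
      rw [hu1, hu2]
  have hBeval : α B = β B := by rw [hext]
  have h1 : α B = P (X' ⁻¹' A ∩ Y' ⁻¹' B) := by
    rw [hα, Measure.map_apply hY' hB, Measure.restrict_apply (hY' hB), inter_comm]
  have h2 : β B = P (X' ⁻¹' A) * P (Y' ⁻¹' B) := by
    simp only [hβ, Measure.smul_apply, smul_eq_mul, hν, hμ,
      Measure.map_apply hX' hA, Measure.map_apply hY' hB]
  rw [← h1, ← h2, hBeval]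

/-- Independence implies the numerator integrand vanishes. -/
lemma num_integrand_zero_of_indep (hX' : Measurable X') (hY' : Measurable Y')
    (hind : IndepFun X' Y' P) (t : ℝ) :
    xiQ P X' Y' t = xiP P Y' t ^ 2 := by
  have hIndep : Indep (MeasurableSpace.comap Y' inferInstance)
      (MeasurableSpace.comap X' inferInstance) P :=
    (IndepFun_iff_Indep Y' X' P).1 hind.symm
  have hsm : StronglyMeasurable[MeasurableSpace.comap Y' inferInstance] (gInd Y' t) := by
    rw [gInd_eq_indicator]
    exact stronglyMeasurable_const.indicator ⟨Ici t, measurableSet_Ici, rfl⟩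
  have hce := condExp_indep_eq hY'.comap_le hX'.comap_le hsm hIndep
  have hv : variance (P[gInd Y' t | MeasurableSpace.comap X' inferInstance]) P = 0 := by
    rw [variance_congr_ae hce, variance_const']
  rw [variance_condexp_eq hX' hY' t] at hv
  linarith

end Core3

noncomputable section Core4

variable {Ω : Type*} [MeasurableSpace Ω] {P : Measure Ω} [IsProbabilityMeasure P] {X' Y' : Ω → ℝ}

lemma measurableSet_B (X' Y' : Ω → ℝ) (t : ℝ) :
    MeasurableSet {x : ℝ | 1 ≤ xiF P X' Y' x t} :=
  measurableSet_le measurable_const (measurable_xiF_fst X' Y' t)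

/-- For a good `t`, the indicator `1_{Y' ≥ t}` is a.s. a function of `X'`. -/
lemma gInd_iff_of_eq (hX' : Measurable X') (hY' : Measurable Y') (t : ℝ)
    (ht : xiQ P X' Y' t = xiP P Y' t) :
    ∀ᵐ ω ∂P, (t ≤ Y' ω ↔ 1 ≤ xiF P X' Y' (X' ω) t) := by
  haveI : IsProbabilityMeasure (P.map X') := Measure.isProbabilityMeasure_map hX'.aemeasurable
  set ν := P.map X' with hν
  set B := {x : ℝ | 1 ≤ xiF P X' Y' x t} with hB
  have hBm : MeasurableSet B := measurableSet_B X' Y' t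
  have hintF : Integrable (fun x => xiF P X' Y' x t) ν :=
    integrable_of_bound (measurable_xiF_fst X' Y' t).aestronglyMeasurable
      (fun x => abs_le.2 ⟨by linarith [xiF_nonneg (P := P) X' Y' x t], xiF_le_one X' Y' x t⟩)
  have hintF2 : Integrable (fun x => xiF P X' Y' x t ^ 2) ν :=
    integrable_of_bound ((measurable_xiF_fst X' Y' t).pow_const 2).aestronglyMeasurable
      (fun x => abs_le.2 ⟨by nlinarith [sq_nonneg (xiF P X' Y' x t)],
        pow_le_one₀ (xiF_nonneg X' Y' x t) (xiF_le_one X' Y' x t)⟩)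
  -- F ∈ {0,1} a.e.
  have hν01 : ∀ᵐ x ∂ν, xiF P X' Y' x t = B.indicator (fun _ => (1 : ℝ)) x := by
    have hzero : ∫ x, (xiF P X' Y' x t - xiF P X' Y' x t ^ 2) ∂ν = 0 := by
      rw [integral_sub hintF hintF2, integral_xiF hX' hY' t]
      have : xiQ P X' Y' t = ∫ x, xiF P X' Y' x t ^ 2 ∂ν := rfl
      linarith
    have hnn : ∀ x, 0 ≤ xiF P X' Y' x t - xiF P X' Y' x t ^ 2 := fun x => by
      nlinarith [xiF_nonneg (P := P) X' Y' x t, xiF_le_one (P := P) X' Y' x t]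
    have hae0 := (integral_eq_zero_iff_of_nonneg hnn (hintF.sub hintF2)).1 hzero
    filter_upwards [hae0] with x hx
    simp only [Pi.zero_apply] at hx
    have h01 : xiF P X' Y' x t = 0 ∨ xiF P X' Y' x t = 1 := by
      have : xiF P X' Y' x t * (1 - xiF P X' Y' x t) = 0 := by nlinarith [hx]
      rcases mul_eq_zero.1 this with h' | h'
      · exact Or.inl h'
      · exact Or.inr (by linarith)
    rcases h01 with h' | h'
    · have hxB : x ∉ B := by simp [hB, h']
      simp [indicator_apply, hxB, h']
    · have hxB : x ∈ B := by simp [hB, h']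
      simp [indicator_apply, hxB, h']
  have hP01 : ∀ᵐ ω ∂P, xiF P X' Y' (X' ω) t = B.indicator (fun _ => (1 : ℝ)) (X' ω) :=
    ae_of_ae_map hX'.aemeasurable hν01
  set S := X' ⁻¹' B with hS
  have hSm : MeasurableSet S := hX' hBm
  have hSm' : MeasurableSet[MeasurableSpace.comap X' inferInstance] S := ⟨B, hBm, rfl⟩
  set a : Ω → ℝ := gInd Y' t with ha
  set b : Ω → ℝ := S.indicator (fun _ => (1 : ℝ)) with hb
  have hba : ∀ ω, B.indicator (fun _ => (1 : ℝ)) (X' ω) = b ω := by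
    intro ω
    by_cases hω : X' ω ∈ B <;> simp [hb, indicator_apply, hS, hω]
  have hce : P[a | MeasurableSpace.comap X' inferInstance] =ᵐ[P] b := by
    filter_upwards [condexp_gInd hX' hY' t, hP01] with ω h1 h2
    rw [h1, h2, hba]
  have hbm : Measurable b := measurable_const.indicator hSm
  have hbint : Integrable b P :=
    integrable_of_bound hbm.aestronglyMeasurable
      (fun ω => by by_cases hω : ω ∈ S <;> simp [hb, indicator_apply, hω])
  have haint : Integrable a P := integrable_gInd hY' t
  have habint : Integrable (fun ω => a ω * b ω) P := by
    refine integrable_of_bound ((measurable_gInd hY' t).mul hbm).aestronglyMeasurable ?_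
    intro ω
    by_cases h1 : t ≤ Y' ω <;> by_cases h2 : ω ∈ S <;>
      simp [ha, hb, gInd, indicator_apply, h1, h2]
  -- ∫ a b = ∫ b
  have hI1 : ∫ ω, a ω * b ω ∂P = ∫ ω in S, a ω ∂P := by
    rw [← integral_indicator hSm]
    congr 1
    funext ω
    by_cases hω : ω ∈ S <;> simp [hb, indicator_apply, hω]
  have hI2 : ∫ ω in S, a ω ∂P = ∫ ω in S, b ω ∂P := by
    rw [← setIntegral_condExp hX'.comap_le haint hSm']
    exact integral_congr_ae (ae_restrict_of_ae hce)
  have hI3 : ∫ ω in S, b ω ∂P = ∫ ω, b ω ∂P := by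
    rw [← integral_indicator hSm]
    congr 1
    funext ω
    by_cases hω : ω ∈ S <;> simp [hb, indicator_apply, hω]
  have hIab : ∫ ω, a ω * b ω ∂P = ∫ ω, b ω ∂P := by rw [hI1, hI2, hI3]
  -- ∫ a = ∫ b
  have hIa : ∫ ω, a ω ∂P = ∫ ω, b ω ∂P := by
    rw [← integral_condExp hX'.comap_le (f := a)]
    exact integral_congr_ae hce
  -- ∫ (a-b)^2 = 0
  have hptw : ∀ ω, (a ω - b ω) ^ 2 = a ω - 2 * (a ω * b ω) + b ω := by
    intro ω
    by_cases h1 : t ≤ Y' ω <;> by_cases h2 : ω ∈ S <;>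
      simp [ha, hb, gInd, indicator_apply, h1, h2] <;> ring
  have hd0 : ∫ ω, (a ω - b ω) ^ 2 ∂P = 0 := by
    have : ∫ ω, (a ω - b ω) ^ 2 ∂P
        = ∫ ω, (a ω - 2 * (a ω * b ω) + b ω) ∂P := by
      congr 1
      funext ω
      exact hptw ω
    have h5 : Integrable (fun ω => a ω - 2 * (a ω * b ω)) P :=
      haint.sub (habint.const_mul 2)
    have h6 : Integrable (fun ω => 2 * (a ω * b ω)) P := habint.const_mul 2
    rw [this, integral_add h5 hbint, integral_sub haint h6, integral_const_mul]
    rw [hIab, hIa]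
    ring
  have hdint : Integrable (fun ω => (a ω - b ω) ^ 2) P := by
    have : (fun ω => (a ω - b ω) ^ 2)
        = fun ω => (a ω - 2 * (a ω * b ω) + b ω) := by
      funext ω
      exact hptw ω
    rw [this]
    have h5 : Integrable (fun ω => a ω - 2 * (a ω * b ω)) P :=
      haint.sub (habint.const_mul 2)
    exact h5.add hbint
  have hab : ∀ᵐ ω ∂P, a ω = b ω := by
    have := (integral_eq_zero_iff_of_nonneg (fun ω => sq_nonneg _) hdint).1 hd0
    filter_upwards [this] with ω hω
    simp only [Pi.zero_apply] at hω
    have := sq_eq_zero_iff.1 hω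
    linarith
  filter_upwards [hab] with ω hω
  constructor
  · intro h1
    by_contra h2
    have hωS : ω ∉ S := h2
    simp [ha, hb, gInd, indicator_apply, h1, hωS] at hω
  · intro h1
    by_contra h2
    have hωS : ω ∈ S := h1
    simp [ha, hb, gInd, indicator_apply, h2, hωS] at hω

end Core4

noncomputable section Core5

variable {Ω : Type*} [MeasurableSpace Ω] {P : Measure Ω} [IsProbabilityMeasure P] {X' Y' : Ω → ℝ}

lemma exists_factor_of_ae (hX' : Measurable X') (hY' : Measurable Y')
    (h : ∀ᵐ t ∂(P.map Y'), xiQ P X' Y' t = xiP P Y' t) :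
    ∃ G : ℝ → ℝ, Measurable G ∧ ∀ᵐ ω ∂P, Y' ω = G (X' ω) := by
  haveI : IsProbabilityMeasure (P.map Y') := Measure.isProbabilityMeasure_map hY'.aemeasurable
  set μ := P.map Y' with hμ
  set T := {t : ℝ | ∀ᵐ ω ∂P, (t ≤ Y' ω ↔ 1 ≤ xiF P X' Y' (X' ω) t)} with hT
  have hTc : μ Tᶜ = 0 := by
    have hmem : ∀ᵐ t ∂μ, t ∈ T := by
      filter_upwards [h] with t ht
      exact gInd_iff_of_eq hX' hY' t ht
    rw [ae_iff] at hmem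
    exact hmem
  obtain ⟨T₀, hT₀c, hT₀T, hT₀dense⟩ := exists_countable_dense_from_below μ T hTc
  by_cases hT₀ne : T₀.Nonempty
  swap
  · exfalso
    rw [not_nonempty_iff_eq_empty] at hT₀ne
    have hfalse : ∀ᵐ y ∂μ, False := by
      filter_upwards [hT₀dense] with y hy
      obtain ⟨s, hs, _⟩ := hy 1 one_pos
      rw [hT₀ne] at hs
      exact hs
    have hμuniv : μ univ = 0 := by
      rw [ae_iff] at hfalse
      simpa using hfalse
    simp [measure_univ] at hμuniv
  obtain ⟨e, he⟩ := hT₀c.exists_eq_range hT₀ne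
  have heT : ∀ n, e n ∈ T := fun n => hT₀T (he ▸ mem_range_self n)
  have hall : ∀ᵐ ω ∂P, ∀ n, (e n ≤ Y' ω ↔ 1 ≤ xiF P X' Y' (X' ω) (e n)) :=
    ae_all_iff.2 fun n => heT n
  have hy : ∀ᵐ ω ∂P, ∀ ε : ℝ, 0 < ε → ∃ s ∈ T₀, Y' ω - ε < s ∧ s ≤ Y' ω :=
    ae_of_ae_map hY'.aemeasurable hT₀dense
  set G₀ : ℝ → EReal := fun x =>
    ⨆ n, if 1 ≤ xiF P X' Y' x (e n) then ((e n : ℝ) : EReal) else ⊥ with hG₀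
  have hG₀m : Measurable G₀ :=
    Measurable.iSup fun n =>
      Measurable.ite (measurableSet_B X' Y' (e n)) measurable_const measurable_const
  refine ⟨fun x => (G₀ x).toReal, hG₀m.ereal_toReal, ?_⟩
  filter_upwards [hall, hy] with ω h1 h2
  set y := Y' ω with hyy
  have hkey : G₀ (X' ω) = (y : EReal) := by
    have hle : G₀ (X' ω) ≤ (y : EReal) := by
      refine iSup_le fun n => ?_
      split_ifs with hn
      · exact EReal.coe_le_coe_iff.2 ((h1 n).2 hn)
      · exact bot_le
    have hlt : ∀ ε : ℝ, 0 < ε → ((y - ε : ℝ) : EReal) < G₀ (X' ω) := by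
      intro ε hε
      obtain ⟨s, hsT₀, hs1, hs2⟩ := h2 ε hε
      obtain ⟨n, hn⟩ : ∃ n, e n = s := by
        rw [he] at hsT₀
        exact hsT₀
      have hmemB : 1 ≤ xiF P X' Y' (X' ω) (e n) := (h1 n).1 (by rw [hn]; exact hs2)
      have hterm : (if 1 ≤ xiF P X' Y' (X' ω) (e n) then ((e n : ℝ) : EReal) else ⊥)
          = ((e n : ℝ) : EReal) := if_pos hmemB
      have hcoe : ((y - ε : ℝ) : EReal) < ((e n : ℝ) : EReal) :=
        EReal.coe_lt_coe_iff.2 (by rw [hn]; exact hs1)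
      exact hcoe.trans_le (hterm ▸ le_iSup
        (fun n => if 1 ≤ xiF P X' Y' (X' ω) (e n) then ((e n : ℝ) : EReal) else ⊥) n)
    refine le_antisymm hle ?_
    by_contra hcon
    push_neg at hcon
    have hbot : G₀ (X' ω) ≠ ⊥ := by
      have := hlt 1 one_pos
      exact fun hc => absurd (hc ▸ this) (by simp)
    have htop : G₀ (X' ω) ≠ ⊤ := by
      intro hc
      rw [hc] at hcon
      exact absurd hcon (by simp)
    set g := (G₀ (X' ω)).toReal with hg
    have hcoe : ((g : ℝ) : EReal) = G₀ (X' ω) := EReal.coe_toReal htop hbot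
    have hgy : g < y := by
      rw [← EReal.coe_lt_coe_iff, hcoe]
      exact hcon
    have hfin := hlt (y - g) (by linarith)
    rw [show y - (y - g) = g by ring, hcoe] at hfin
    exact absurd hfin (lt_irrefl _)
  rw [hkey, EReal.toReal_coe]

end Core5

noncomputable section Core6

variable {Ω : Type*} [MeasurableSpace Ω] {P : Measure Ω} [IsProbabilityMeasure P] {X' Y' : Ω → ℝ}

lemma num_integrand_eq_of_factor (hX' : Measurable X') (hY' : Measurable Y') {G : ℝ → ℝ}
    (hG : Measurable G) (hfac : ∀ᵐ ω ∂P, Y' ω = G (X' ω)) (t : ℝ) :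
    xiQ P X' Y' t = xiP P Y' t := by
  set hfun : Ω → ℝ := fun ω => if t ≤ G (X' ω) then 1 else 0 with hhfun
  have hfun_eq : hfun = (X' ⁻¹' (G ⁻¹' Ici t)).indicator (fun _ => (1 : ℝ)) := by
    funext ω
    by_cases hω : t ≤ G (X' ω) <;> simp [hhfun, indicator_apply, mem_Ici, hω]
  have hsm : StronglyMeasurable[MeasurableSpace.comap X' inferInstance] hfun := by
    rw [hfun_eq]
    exact stronglyMeasurable_const.indicator ⟨G ⁻¹' Ici t, hG measurableSet_Ici, rfl⟩
  have hfm : Measurable hfun := by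
    rw [hfun_eq]
    exact measurable_const.indicator (hX' (hG measurableSet_Ici))
  have hint : Integrable hfun P :=
    integrable_of_bound hfm.aestronglyMeasurable
      (fun ω => by by_cases hω : t ≤ G (X' ω) <;> simp [hhfun, hω])
  have hge : gInd Y' t =ᵐ[P] hfun := by
    filter_upwards [hfac] with ω hω
    simp only [gInd, hhfun, hω]
  have hchain : P[gInd Y' t | MeasurableSpace.comap X' inferInstance] =ᵐ[P] gInd Y' t := by
    calc P[gInd Y' t | MeasurableSpace.comap X' inferInstance]
        =ᵐ[P] P[hfun | MeasurableSpace.comap X' inferInstance] := condExp_congr_ae hge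
      _ =ᵐ[P] hfun := by rw [condExp_of_stronglyMeasurable hX'.comap_le hsm hint]
      _ =ᵐ[P] gInd Y' t := hge.symm
  have hv : variance (P[gInd Y' t | MeasurableSpace.comap X' inferInstance]) P
      = variance (gInd Y' t) P := variance_congr_ae hchain
  rw [variance_condexp_eq hX' hY' t, variance_gInd_eq hY' t] at hv
  linarith

/-- Main theorem over the reals. -/
theorem xi_real (hX' : Measurable X') (hY' : Measurable Y')
    (hnc : ¬ ∃ c : ℝ, ∀ᵐ ω ∂P, Y' ω = c) :
    (0 ≤ xiCoef P X' Y' ∧ xiCoef P X' Y' ≤ 1) ∧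
    (xiCoef P X' Y' = 0 ↔ IndepFun X' Y' P) ∧
    (xiCoef P X' Y' = 1 ↔ ∃ G : ℝ → ℝ, Measurable G ∧ ∀ᵐ ω ∂P, Y' ω = G (X' ω)) := by
  haveI : IsProbabilityMeasure (P.map Y') := Measure.isProbabilityMeasure_map hY'.aemeasurable
  have hD : 0 < ∫ t, (xiP P Y' t - xiP P Y' t ^ 2) ∂(P.map Y') := denom_pos hY' hnc
  have hxi := xiCoef_eq (P := P) hX' hY'
  have hNnn : 0 ≤ ∫ t, (xiQ P X' Y' t - xiP P Y' t ^ 2) ∂(P.map Y') :=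
    integral_nonneg fun t => sub_nonneg.2 (sq_xiP_le_xiQ hX' hY' t)
  have hND : (∫ t, (xiQ P X' Y' t - xiP P Y' t ^ 2) ∂(P.map Y'))
      ≤ ∫ t, (xiP P Y' t - xiP P Y' t ^ 2) ∂(P.map Y') :=
    integral_mono (integrable_num_integrand hX' hY') (integrable_denom_integrand hY')
      fun t => sub_le_sub_right (xiQ_le_xiP hX' hY' t) _
  refine ⟨⟨by rw [hxi]; exact div_nonneg hNnn hD.le, by rw [hxi]; exact (div_le_one hD).2 hND⟩,
    ?_, ?_⟩
  · constructor
    · intro h0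
      rw [hxi, div_eq_zero_iff] at h0
      have hN0 : ∫ t, (xiQ P X' Y' t - xiP P Y' t ^ 2) ∂(P.map Y') = 0 := by
        rcases h0 with h' | h'
        · exact h'
        · exact absurd h' hD.ne'
      have hae : ∀ᵐ t ∂(P.map Y'), xiQ P X' Y' t = xiP P Y' t ^ 2 := by
        have := (integral_eq_zero_iff_of_nonneg
          (fun t => sub_nonneg.2 (sq_xiP_le_xiQ hX' hY' t))
          (integrable_num_integrand hX' hY')).1 hN0
        filter_upwards [this] with t ht
        simp only [Pi.zero_apply] at ht
        linarith
      exact indep_of_ae_eq hX' hY' hae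
    · intro hind
      rw [hxi]
      have : ∫ t, (xiQ P X' Y' t - xiP P Y' t ^ 2) ∂(P.map Y') = 0 := by
        have hz : (fun t => xiQ P X' Y' t - xiP P Y' t ^ 2) = fun _ => (0 : ℝ) := by
          funext t
          rw [num_integrand_zero_of_indep hX' hY' hind t]
          ring
        rw [hz, integral_zero]
      rw [this, zero_div]
  · constructor
    · intro h1
      rw [hxi, div_eq_one_iff_eq hD.ne'] at h1
      have hsub : ∫ t, (xiP P Y' t - xiQ P X' Y' t) ∂(P.map Y') = 0 := by
        have heq : (fun t => xiP P Y' t - xiQ P X' Y' t)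
            = fun t => (xiP P Y' t - xiP P Y' t ^ 2) - (xiQ P X' Y' t - xiP P Y' t ^ 2) := by
          funext t
          ring
        rw [heq, integral_sub (integrable_denom_integrand hY') (integrable_num_integrand hX' hY'),
          h1, sub_self]
      have hae : ∀ᵐ t ∂(P.map Y'), xiQ P X' Y' t = xiP P Y' t := by
        have hint2 : Integrable (fun t => xiP P Y' t - xiQ P X' Y' t) (P.map Y') := by
          have h' : Integrable (fun t =>
              (xiP P Y' t - xiP P Y' t ^ 2) - (xiQ P X' Y' t - xiP P Y' t ^ 2)) (P.map Y') :=
            (integrable_denom_integrand hY').sub (integrable_num_integrand hX' hY')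
          exact h'.congr (ae_of_all _ fun t => by ring)
        have := (integral_eq_zero_iff_of_nonneg
          (fun t => sub_nonneg.2 (xiQ_le_xiP hX' hY' t)) hint2).1 hsub
        filter_upwards [this] with t ht
        simp only [Pi.zero_apply] at ht
        linarith
      exact exists_factor_of_ae hX' hY' hae
    · rintro ⟨G, hG, hfac⟩
      rw [hxi]
      have heq : (fun t => xiQ P X' Y' t - xiP P Y' t ^ 2)
          = fun t => xiP P Y' t - xiP P Y' t ^ 2 := by
        funext t
        rw [num_integrand_eq_of_factor hX' hY' hG hfac t]
      rw [heq]
      exact div_self hD.ne'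

end Core6

/-- Let `𝒳, 𝒴` be standard Borel spaces, `φ : 𝒳 → ℝ`, `ψ : 𝒴 → ℝ`
measurable injections with measurable images and measurable inverses (i.e. measurable
embeddings, Borel isomorphisms onto Borel subsets of `ℝ`), and `(X,Y)` an
`𝒳 × 𝒴`-valued pair of random variables with `Y` not a.s. constant.  Set `X' = φ∘X`,
`Y' = ψ∘Y`.  Then (i) `ξ(X',Y') ∈ [0,1]`; (ii) `ξ(X',Y') = 0` iff `X ⟂ Y`;
(iii) `ξ(X',Y') = 1` iff `Y = f(X)` a.s. for some measurable `f : 𝒳 → 𝒴`. -/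
theorem xi_standardBorel
    {𝒳 𝒴 : Type*} [MeasurableSpace 𝒳] [StandardBorelSpace 𝒳]
    [MeasurableSpace 𝒴] [StandardBorelSpace 𝒴]
    (φ : 𝒳 → ℝ) (ψ : 𝒴 → ℝ) (hφ : MeasurableEmbedding φ) (hψ : MeasurableEmbedding ψ)
    {Ω : Type*} [MeasurableSpace Ω] (P : Measure Ω) [IsProbabilityMeasure P]
    (X : Ω → 𝒳) (Y : Ω → 𝒴) (hX : Measurable X) (hY : Measurable Y)
    (hYnonconst : ¬ ∃ c : 𝒴, ∀ᵐ ω ∂P, Y ω = c) :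
    (0 ≤ xiCoef P (fun ω => φ (X ω)) (fun ω => ψ (Y ω)) ∧
      xiCoef P (fun ω => φ (X ω)) (fun ω => ψ (Y ω)) ≤ 1) ∧
    (xiCoef P (fun ω => φ (X ω)) (fun ω => ψ (Y ω)) = 0 ↔ IndepFun X Y P) ∧
    (xiCoef P (fun ω => φ (X ω)) (fun ω => ψ (Y ω)) = 1 ↔
      ∃ f : 𝒳 → 𝒴, Measurable f ∧ ∀ᵐ ω ∂P, Y ω = f (X ω)) := by
  have hX'm : Measurable (fun ω => φ (X ω)) := hφ.measurable.comp hX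
  have hY'm : Measurable (fun ω => ψ (Y ω)) := hψ.measurable.comp hY
  have hPne : (ae P).NeBot := ae_neBot.2 (IsProbabilityMeasure.ne_zero P)
  have hnc' : ¬ ∃ c : ℝ, ∀ᵐ ω ∂P, ψ (Y ω) = c := by
    rintro ⟨c, hc⟩
    obtain ⟨ω₀, hω₀⟩ := hc.exists
    refine hYnonconst ⟨Y ω₀, ?_⟩
    filter_upwards [hc] with ω hω
    exact hψ.injective (by rw [hω, ← hω₀])
  have hmain := xi_real (P := P) hX'm hY'm hnc'
  have hOmega : Nonempty Ω := by
    by_contra h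
    rw [not_nonempty_iff] at h
    have : P univ = 1 := measure_univ
    rw [show (univ : Set Ω) = ∅ from Set.univ_eq_empty_iff.2 h, measure_empty] at this
    exact zero_ne_one this
  have h𝒴 : Nonempty 𝒴 := ⟨Y (Classical.arbitrary Ω)⟩
  have h𝒳 : Nonempty 𝒳 := ⟨X (Classical.arbitrary Ω)⟩
  refine ⟨hmain.1, ?_, ?_⟩
  · rw [hmain.2.1]
    rw [IndepFun_iff_Indep, IndepFun_iff_Indep]
    have h1 : MeasurableSpace.comap (fun ω => φ (X ω)) (inferInstance : MeasurableSpace ℝ)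
        = MeasurableSpace.comap X inferInstance := by
      rw [show (fun ω => φ (X ω)) = φ ∘ X from rfl, ← MeasurableSpace.comap_comp, hφ.comap_eq]
    have h2 : MeasurableSpace.comap (fun ω => ψ (Y ω)) (inferInstance : MeasurableSpace ℝ)
        = MeasurableSpace.comap Y inferInstance := by
      rw [show (fun ω => ψ (Y ω)) = ψ ∘ Y from rfl, ← MeasurableSpace.comap_comp, hψ.comap_eq]
    rw [h1, h2]
  · rw [hmain.2.2]
    constructor
    · rintro ⟨G, hG, hfac⟩
      obtain ⟨r, hrm, hr⟩ := hψ.exists_measurable_extend measurable_id (fun _ => h𝒴)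
      refine ⟨fun x => r (G (φ x)), hrm.comp (hG.comp hφ.measurable), ?_⟩
      filter_upwards [hfac] with ω hω
      have : Y ω = r (ψ (Y ω)) := (congrFun hr (Y ω)).symm
      rw [this, hω]
    · rintro ⟨f, hf, hfac⟩
      obtain ⟨r, hrm, hr⟩ := hφ.exists_measurable_extend measurable_id (fun _ => h𝒳)
      refine ⟨fun z => ψ (f (r z)), hψ.measurable.comp (hf.comp hrm), ?_⟩
      filter_upwards [hfac] with ω hω
      have : r (φ (X ω)) = X ω := congrFun hr (X ω)
      rw [this, ← hω]
end
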